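/- arXiv:1906.03827 — 5 statements merged into one kernel-verified Lean document; each statement's English description precedes it below -/
import Mathlib

section
/- Let n ≥ 1 and let μ, ν ∈ ℝ be such that μ + ν ≥ n − 2 and μ ≤ n. Then the integral operator Tf(x) = ∫_{ℝ^n} K(x,y) f(y) dy with kernel K(x,y) = e^{−|x|^2+|y|^2} |x|^{−μ} (1+|x|)^{−ν} is of weak type (1,1) with respect to γ_{-1}. -/
open MeasureTheory Real Filter Set

noncomputable def gaussM (n : ℕ) : Measure (EuclideanSpace ℝ (Fin n)) :=
  volume.withDensity fun x => ENNReal.ofReal (Real.pi ^ ((n : ℝ) / 2) * Real.exp (‖x‖ ^ 2))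

noncomputable def hermiteH (k : ℕ) (s : ℝ) : ℝ :=
  (-1 : ℝ) ^ k * Real.exp (s ^ 2) * iteratedDeriv k (fun t => Real.exp (-t ^ 2)) s

noncomputable def rieszKernel {n : ℕ} (α : Fin n → ℕ) (x y : EuclideanSpace ℝ (Fin n)) : ℝ :=
  ((-1 : ℝ) ^ (∑ j, α j) / (Real.pi ^ ((n : ℝ) / 2) * Real.Gamma ((∑ j, α j : ℕ) / 2 : ℝ))) *
    ∫ r in Set.Ioo (0 : ℝ) 1,
      r ^ (n - 1) * (-Real.log r) ^ (((∑ j, α j : ℕ) : ℝ) / 2 - 1) *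
        (1 - r ^ 2) ^ (-(((n : ℝ) + ((∑ j, α j : ℕ) : ℝ)) / 2)) *
        (∏ j, hermiteH (α j) ((x j - r * y j) / Real.sqrt (1 - r ^ 2))) *
        Real.exp (-‖x - r • y‖ ^ 2 / (1 - r ^ 2))

noncomputable def projPar {n : ℕ} (x y : EuclideanSpace ℝ (Fin n)) : EuclideanSpace ℝ (Fin n) :=
  (inner ℝ y x / ‖x‖ ^ 2 : ℝ) • x

def Nset (n : ℕ) (δ : ℝ) : Set (EuclideanSpace ℝ (Fin n) × EuclideanSpace ℝ (Fin n)) :=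
  {p | ‖p.1 - p.2‖ ≤ δ / (1 + ‖p.1‖ + ‖p.2‖)}

def WeakType11 {n : ℕ} (K : EuclideanSpace ℝ (Fin n) → EuclideanSpace ℝ (Fin n) → ℝ) : Prop :=
  ∃ C : ℝ, ∀ f : EuclideanSpace ℝ (Fin n) → ℝ, Integrable f (gaussM n) →
    ∀ s : ℝ, 0 < s →
      gaussM n {x | s < |∫ y, K x y * f y|} ≤
        ENNReal.ofReal (C / s * ∫ y, |f y| ∂(gaussM n))

/-!
The kernel factors as `exp (-‖x‖²) ‖x‖^(-μ) (1 + ‖x‖)^(-ν) · exp ‖y‖² = g ‖x‖ · exp ‖y‖²`, so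
`|T f x| ≤ g ‖x‖ · π^(-n/2) ‖f‖_{L¹(γ₋₁)}` and it suffices that `γ₋₁ {g ∘ ‖·‖ > t} ≲ 1 / t`.
Inside the unit ball `γ₋₁` is comparable to Lebesgue measure and `g r ≲ r^(-μ)`; since `μ ≤ n`,
every point of the superlevel set there satisfies `t rⁿ ≲ 1`, so the set lies in a ball of volume
`≲ 1 / t`. Outside the unit ball, `μ + ν ≥ n - 2` gives `g r · exp (r²) r^(n-2) ≲ 1`, while
`γ₋₁ (B(0, S)) ≲ exp (S²) S^(n-2)` for `S ≥ 1` (polar coordinates and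
`r^(n-1) exp (r²) ≤ (d/dr) (exp (r²) r^(n-2))`), so the superlevel set again has measure `≲ 1 / t`.
-/

/-- Up to a constant, the `γ₋₁`-measure of the ball of radius `r ≥ 1` in `ℝⁿ`. -/
noncomputable def gaussBallGrowth (n : ℕ) (r : ℝ) : ℝ :=
  Real.exp (r ^ 2) * r ^ ((n : ℝ) - 2)

section gaussBallGrowth

variable {n : ℕ} {r : ℝ}

lemma gaussBallGrowth_pos (hr : 0 < r) : 0 < gaussBallGrowth n r := by
  unfold gaussBallGrowth; positivity

lemma self_le_gaussBallGrowth (hn : 1 ≤ n) (hr : 1 ≤ r) : r ≤ gaussBallGrowth n r := by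
  have hr0 : 0 < r := by linarith
  have hpow : r ^ (-1 : ℝ) ≤ r ^ ((n : ℝ) - 2) :=
    Real.rpow_le_rpow_of_exponent_le hr (by linarith [(Nat.one_le_cast (α := ℝ)).2 hn])
  have hexp : r ^ 2 ≤ Real.exp (r ^ 2) := by linarith [Real.add_one_le_exp (r ^ 2)]
  calc r = r ^ 2 * r ^ (-1 : ℝ) := by rw [Real.rpow_neg_one]; field_simp
    _ ≤ gaussBallGrowth n r := by unfold gaussBallGrowth; gcongr

lemma continuousOn_gaussBallGrowth : ContinuousOn (gaussBallGrowth n) (Ioi 0) := by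
  unfold gaussBallGrowth
  exact (by fun_prop : Continuous fun r : ℝ => Real.exp (r ^ 2)).continuousOn.mul
    (continuousOn_id.rpow_const fun r hr => Or.inl (ne_of_gt hr))

lemma hasDerivAt_gaussBallGrowth (hr : 0 < r) :
    HasDerivAt (gaussBallGrowth n)
      (Real.exp (r ^ 2) * (2 * r ^ ((n : ℝ) - 1) + ((n : ℝ) - 2) * r ^ ((n : ℝ) - 3))) r := by
  have hexp : HasDerivAt (fun r : ℝ => Real.exp (r ^ 2)) (Real.exp (r ^ 2) * (2 * r)) r := by
    simpa using (hasDerivAt_pow 2 r).exp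
  have hpow := Real.hasDerivAt_rpow_const (p := (n : ℝ) - 2) (Or.inl hr.ne')
  refine (hexp.mul hpow).congr_deriv ?_
  rw [show (n : ℝ) - 1 = 1 + ((n : ℝ) - 2) by ring, Real.rpow_add hr, Real.rpow_one,
    show (n : ℝ) - 2 - 1 = (n : ℝ) - 3 by ring]
  ring

lemma integral_pow_mul_exp_sq_le (hn : 1 ≤ n) {S : ℝ} (hS : 1 ≤ S) :
    ∫ r in (1 : ℝ)..S, r ^ (n - 1) * Real.exp (r ^ 2) ≤
      gaussBallGrowth n S - gaussBallGrowth n 1 := by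
  refine intervalIntegral.integral_le_sub_of_hasDeriv_right_of_le hS
    (continuousOn_gaussBallGrowth.mono fun r hr => one_pos.trans_le hr.1)
    (fun r hr => (hasDerivAt_gaussBallGrowth (by linarith [hr.1])).hasDerivWithinAt)
    (by fun_prop : Continuous fun r : ℝ => r ^ (n - 1) * Real.exp (r ^ 2)).integrableOn_Icc
    fun r hr => ?_
  have hr0 : 0 < r := by linarith [hr.1]
  have hnat : r ^ (n - 1) = r ^ ((n : ℝ) - 1) := by
    rw [← Real.rpow_natCast, Nat.cast_sub hn, Nat.cast_one]
  have hlow : r ^ ((n : ℝ) - 3) ≤ r ^ ((n : ℝ) - 1) :=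
    Real.rpow_le_rpow_of_exponent_le hr.1.le (by linarith)
  have hn' : (1 : ℝ) ≤ n := by exact_mod_cast hn
  rw [hnat, mul_comm]
  gcongr
  nlinarith [Real.rpow_nonneg hr0.le ((n : ℝ) - 3)]

lemma exists_isGreatest_gaussBallGrowth_le (hn : 1 ≤ n) {A : ℝ}
    (h : {r : ℝ | 1 ≤ r ∧ gaussBallGrowth n r ≤ A}.Nonempty) :
    ∃ S, IsGreatest {r : ℝ | 1 ≤ r ∧ gaussBallGrowth n r ≤ A} S := by
  have hclosed : IsClosed {r : ℝ | 1 ≤ r ∧ gaussBallGrowth n r ≤ A} :=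
    (continuousOn_gaussBallGrowth.mono fun r (hr : 1 ≤ r) => one_pos.trans_le hr)
      |>.preimage_isClosed_of_isClosed isClosed_Ici isClosed_Iic
  have hbdd : BddAbove {r : ℝ | 1 ≤ r ∧ gaussBallGrowth n r ≤ A} :=
    ⟨A, fun r hr => (self_le_gaussBallGrowth hn hr.1).trans hr.2⟩
  exact ⟨_, hclosed.isGreatest_csSup h hbdd⟩

end gaussBallGrowth

noncomputable def powerProfile (μ ν r : ℝ) : ℝ :=
  Real.exp (-r ^ 2) * r ^ (-μ) * (1 + r) ^ (-ν)

section powerProfile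

variable {μ ν r : ℝ}

lemma powerProfile_nonneg (hr : 0 ≤ r) : 0 ≤ powerProfile μ ν r := by
  unfold powerProfile; positivity

lemma one_add_rpow_neg_le_max_of_le_one (hr0 : 0 ≤ r) (hr1 : r ≤ 1) :
    (1 + r) ^ (-ν) ≤ max 1 ((2 : ℝ) ^ (-ν)) := by
  rcases le_total 0 ν with hν | hν
  · exact (Real.rpow_le_one_of_one_le_of_nonpos (by linarith) (by linarith)).trans
      (le_max_left _ _)
  · exact (Real.rpow_le_rpow (by linarith) (by linarith) (by linarith)).trans (le_max_right _ _)

lemma one_add_rpow_neg_le_max_mul_of_one_le (hr : 1 ≤ r) :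
    (1 + r) ^ (-ν) ≤ max 1 ((2 : ℝ) ^ (-ν)) * r ^ (-ν) := by
  have hr0 : 0 < r := by linarith
  rcases le_total 0 ν with hν | hν
  · calc (1 + r) ^ (-ν) ≤ r ^ (-ν) := Real.rpow_le_rpow_of_nonpos hr0 (by linarith) (by linarith)
      _ ≤ max 1 ((2 : ℝ) ^ (-ν)) * r ^ (-ν) :=
        le_mul_of_one_le_left (Real.rpow_nonneg hr0.le _) (le_max_left _ _)
  · calc (1 + r) ^ (-ν) ≤ (2 * r) ^ (-ν) :=
          Real.rpow_le_rpow (by linarith) (by linarith) (by linarith)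
      _ = (2 : ℝ) ^ (-ν) * r ^ (-ν) := Real.mul_rpow (by norm_num) hr0.le
      _ ≤ max 1 ((2 : ℝ) ^ (-ν)) * r ^ (-ν) := by gcongr; exact le_max_right _ _

lemma mul_pow_lt_of_lt_powerProfile {n : ℕ} {t : ℝ} (hn : 1 ≤ n) (hμ : μ ≤ n) (ht : 0 < t)
    (hr0 : 0 ≤ r) (hr1 : r ≤ 1) (h : t < powerProfile μ ν r) :
    t * r ^ n < max 1 ((2 : ℝ) ^ (-ν)) := by
  set c := max 1 ((2 : ℝ) ^ (-ν))
  have hc : 1 ≤ c := le_max_left _ _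
  rcases hr0.eq_or_lt with rfl | hr
  · rw [zero_pow (by omega), mul_zero]; linarith
  have hprofile : powerProfile μ ν r ≤ c * r ^ (-μ) := by
    have hexp : Real.exp (-r ^ 2) ≤ 1 := Real.exp_le_one_iff.2 (by nlinarith)
    calc powerProfile μ ν r ≤ 1 * r ^ (-μ) * c := by
          unfold powerProfile
          gcongr
          exact one_add_rpow_neg_le_max_of_le_one hr0 hr1
      _ = c * r ^ (-μ) := by ring
  have hpow : r ^ n ≤ r ^ μ := by
    rw [← Real.rpow_natCast]; exact Real.rpow_le_rpow_of_exponent_ge hr hr1 hμ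
  calc t * r ^ n ≤ t * r ^ μ := by gcongr
    _ < c * r ^ (-μ) * r ^ μ := by gcongr; exact h.trans_le hprofile
    _ = c := by rw [mul_assoc, ← Real.rpow_add hr, neg_add_cancel, Real.rpow_zero, mul_one]

lemma powerProfile_mul_gaussBallGrowth_le {n : ℕ} (hμν : (n : ℝ) - 2 ≤ μ + ν) (hr : 1 ≤ r) :
    powerProfile μ ν r * gaussBallGrowth n r ≤ max 1 ((2 : ℝ) ^ (-ν)) := by
  have hr0 : 0 < r := by linarith
  calc powerProfile μ ν r * gaussBallGrowth n r
      ≤ Real.exp (-r ^ 2) * r ^ (-μ) * (max 1 ((2 : ℝ) ^ (-ν)) * r ^ (-ν)) *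
          gaussBallGrowth n r := by
        unfold powerProfile
        gcongr
        · exact (gaussBallGrowth_pos hr0).le
        · exact one_add_rpow_neg_le_max_mul_of_one_le hr
    _ = max 1 ((2 : ℝ) ^ (-ν)) * (Real.exp (-r ^ 2) * Real.exp (r ^ 2)) *
          r ^ (-(μ + ν) + ((n : ℝ) - 2)) := by
        unfold gaussBallGrowth
        rw [Real.rpow_add hr0, neg_add, Real.rpow_add hr0]
        ring
    _ ≤ max 1 ((2 : ℝ) ^ (-ν)) * 1 * 1 := by
        rw [← Real.exp_add, neg_add_cancel, Real.exp_zero]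
        gcongr
        exact Real.rpow_le_one_of_one_le_of_nonpos hr (by linarith)
    _ = max 1 ((2 : ℝ) ^ (-ν)) := by ring

end powerProfile

lemma setIntegral_closedBall_fun_norm {E F : Type*} [NormedAddCommGroup E]
    [InnerProductSpace ℝ E] [FiniteDimensional ℝ E] [Nontrivial E] [MeasurableSpace E]
    [BorelSpace E] [NormedAddCommGroup F] [NormedSpace ℝ F] (μ : Measure E) [μ.IsAddHaarMeasure]
    (f : ℝ → F) (S : ℝ) :
    ∫ x in Metric.closedBall 0 S, f ‖x‖ ∂μ =
      Module.finrank ℝ E • μ.real (Metric.ball 0 1) •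
        ∫ r in Ioc 0 S, r ^ (Module.finrank ℝ E - 1) • f r := by
  have hball : ∀ x : E, (Metric.closedBall 0 S).indicator (fun x => f ‖x‖) x =
      (Iic S).indicator f ‖x‖ := fun x => by simp [indicator]
  rw [← integral_indicator measurableSet_closedBall, funext hball, integral_fun_norm_addHaar,
    ← Ioi_inter_Iic, ← setIntegral_indicator measurableSet_Iic]
  simp_rw [indicator_smul_apply]

section gaussM

variable {n : ℕ}

lemma integral_gaussM (f : EuclideanSpace ℝ (Fin n) → ℝ) :
    ∫ y, f y ∂gaussM n = Real.pi ^ ((n : ℝ) / 2) * ∫ y, Real.exp (‖y‖ ^ 2) * f y := by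
  rw [gaussM, integral_withDensity_eq_integral_toReal_smul (by fun_prop)
    (ae_of_all _ fun _ => ENNReal.ofReal_lt_top), ← integral_const_mul]
  congr 1 with y
  rw [ENNReal.toReal_ofReal (by positivity), smul_eq_mul, mul_assoc]

lemma gaussM_closedBall (R : ℝ) :
    gaussM n (Metric.closedBall 0 R) =
      ENNReal.ofReal (Real.pi ^ ((n : ℝ) / 2) *
        ∫ x in Metric.closedBall (0 : EuclideanSpace ℝ (Fin n)) R, Real.exp (‖x‖ ^ 2)) := by
  have hint : IntegrableOn (fun x : EuclideanSpace ℝ (Fin n) =>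
      Real.pi ^ ((n : ℝ) / 2) * Real.exp (‖x‖ ^ 2)) (Metric.closedBall 0 R) :=
    (by fun_prop : Continuous _).continuousOn.integrableOn_compact (isCompact_closedBall 0 R)
  rw [gaussM, withDensity_apply _ measurableSet_closedBall, ← integral_const_mul,
    ofReal_integral_eq_lintegral_ofReal hint (ae_of_all _ fun _ => by positivity)]

lemma gaussM_closedBall_le {R : ℝ} (hR : 0 ≤ R) :
    gaussM n (Metric.closedBall 0 R) ≤
      ENNReal.ofReal (Real.pi ^ ((n : ℝ) / 2) *
        (Real.exp (R ^ 2) * R ^ n *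
          volume.real (Metric.ball (0 : EuclideanSpace ℝ (Fin n)) 1))) := by
  rw [gaussM_closedBall]
  gcongr
  calc ∫ x in Metric.closedBall (0 : EuclideanSpace ℝ (Fin n)) R, Real.exp (‖x‖ ^ 2)
      ≤ ∫ _ in Metric.closedBall (0 : EuclideanSpace ℝ (Fin n)) R, Real.exp (R ^ 2) := by
        refine setIntegral_mono_on ((by fun_prop : Continuous fun x : EuclideanSpace ℝ (Fin n) =>
            Real.exp (‖x‖ ^ 2)).continuousOn.integrableOn_compact (isCompact_closedBall 0 R))
          (integrableOn_const measure_closedBall_lt_top.ne) measurableSet_closedBall fun x hx => ?_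
        rw [mem_closedBall_zero_iff] at hx
        gcongr
    _ = Real.exp (R ^ 2) * R ^ n *
          volume.real (Metric.ball (0 : EuclideanSpace ℝ (Fin n)) 1) := by
        rw [setIntegral_const, Measure.addHaar_real_closedBall _ _ hR, finrank_euclideanSpace_fin,
          smul_eq_mul]
        ring

lemma gaussM_closedBall_le_gaussBallGrowth (hn : 1 ≤ n) {S : ℝ} (hS : 1 ≤ S) :
    gaussM n (Metric.closedBall 0 S) ≤
      ENNReal.ofReal (Real.pi ^ ((n : ℝ) / 2) * (n * volume.real (Metric.ball
        (0 : EuclideanSpace ℝ (Fin n)) 1) * ((Real.exp 1 + 1) * gaussBallGrowth n S))) := by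
  have hcont : Continuous fun r : ℝ => r ^ (n - 1) * Real.exp (r ^ 2) := by fun_prop
  have hinner : ∫ r in (0 : ℝ)..1, r ^ (n - 1) * Real.exp (r ^ 2) ≤ Real.exp 1 := by
    calc ∫ r in (0 : ℝ)..1, r ^ (n - 1) * Real.exp (r ^ 2) ≤ ∫ _ in (0 : ℝ)..1, Real.exp 1 := by
          refine intervalIntegral.integral_mono_on zero_le_one (hcont.intervalIntegrable _ _)
            intervalIntegrable_const fun r hr => ?_
          have hr2 : r ^ 2 ≤ 1 := by nlinarith [hr.1, hr.2]
          have hpow : r ^ (n - 1) ≤ 1 := pow_le_one₀ hr.1 hr.2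
          calc r ^ (n - 1) * Real.exp (r ^ 2) ≤ 1 * Real.exp 1 := by gcongr
            _ = Real.exp 1 := one_mul _
      _ = Real.exp 1 := by simp
  have hradial : ∫ r in (0 : ℝ)..S, r ^ (n - 1) * Real.exp (r ^ 2) ≤
      (Real.exp 1 + 1) * gaussBallGrowth n S := by
    have hgrowth : 1 ≤ gaussBallGrowth n S := hS.trans (self_le_gaussBallGrowth hn hS)
    rw [← intervalIntegral.integral_add_adjacent_intervals (hcont.intervalIntegrable 0 1)
      (hcont.intervalIntegrable 1 S)]
    nlinarith [integral_pow_mul_exp_sq_le hn hS,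
      gaussBallGrowth_pos (n := n) one_pos, Real.exp_pos 1]
  have : NeZero n := ⟨by omega⟩
  rw [gaussM_closedBall]
  gcongr
  rw [setIntegral_closedBall_fun_norm volume (fun r => Real.exp (r ^ 2)),
    finrank_euclideanSpace_fin, ← intervalIntegral.integral_of_le (by linarith), nsmul_eq_mul,
    smul_eq_mul, mul_assoc]
  gcongr
  simpa using hradial

end gaussM

section superlevel

variable {n : ℕ} {μ ν : ℝ}

lemma gaussM_superlevel_inter_closedBall_le (hn : 1 ≤ n) (hμ : μ ≤ n) :
    ∃ C, 0 ≤ C ∧ ∀ t, 0 < t →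
      gaussM n ({x : EuclideanSpace ℝ (Fin n) | t < powerProfile μ ν ‖x‖} ∩
        Metric.closedBall 0 1) ≤ ENNReal.ofReal (C / t) := by
  set c := max 1 ((2 : ℝ) ^ (-ν))
  set vb := volume.real (Metric.ball (0 : EuclideanSpace ℝ (Fin n)) 1)
  refine ⟨Real.pi ^ ((n : ℝ) / 2) * (Real.exp 1 * c * vb), by positivity, fun t ht => ?_⟩
  have hA : 0 ≤ c / t := by positivity
  set m := min 1 ((c / t) ^ (n⁻¹ : ℝ))
  have hm0 : 0 ≤ m := le_min zero_le_one (by positivity)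
  have hm1 : m ^ 2 ≤ 1 := pow_le_one₀ hm0 (min_le_left _ _)
  have hpow : m ^ n ≤ c / t :=
    calc m ^ n ≤ ((c / t) ^ (n⁻¹ : ℝ)) ^ n := by gcongr; exact min_le_right _ _
      _ = c / t := Real.rpow_inv_natCast_pow hA (by omega)
  have hsub : {x : EuclideanSpace ℝ (Fin n) | t < powerProfile μ ν ‖x‖} ∩
      Metric.closedBall 0 1 ⊆ Metric.closedBall 0 m := by
    rintro x ⟨hx, hx1⟩
    rw [mem_closedBall_zero_iff] at hx1 ⊢
    refine le_min hx1 (lt_of_pow_lt_pow_left₀ n (by positivity) ?_).le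
    rw [Real.rpow_inv_natCast_pow hA (by omega), lt_div_iff₀ ht, mul_comm]
    exact mul_pow_lt_of_lt_powerProfile hn hμ ht (norm_nonneg x) hx1 hx
  calc gaussM n _ ≤ gaussM n (Metric.closedBall 0 m) := measure_mono hsub
    _ ≤ ENNReal.ofReal (Real.pi ^ ((n : ℝ) / 2) * (Real.exp (m ^ 2) * m ^ n * vb)) :=
      gaussM_closedBall_le hm0
    _ ≤ ENNReal.ofReal (Real.pi ^ ((n : ℝ) / 2) * (Real.exp 1 * (c / t) * vb)) := by gcongr
    _ = ENNReal.ofReal (Real.pi ^ ((n : ℝ) / 2) * (Real.exp 1 * c * vb) / t) := by ring_nf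

lemma gaussM_superlevel_diff_closedBall_le (hn : 1 ≤ n) (hμν : (n : ℝ) - 2 ≤ μ + ν) :
    ∃ C, 0 ≤ C ∧ ∀ t, 0 < t →
      gaussM n ({x : EuclideanSpace ℝ (Fin n) | t < powerProfile μ ν ‖x‖} \
        Metric.closedBall 0 1) ≤ ENNReal.ofReal (C / t) := by
  set c := max 1 ((2 : ℝ) ^ (-ν))
  set vb := volume.real (Metric.ball (0 : EuclideanSpace ℝ (Fin n)) 1)
  refine ⟨Real.pi ^ ((n : ℝ) / 2) * (n * vb * ((Real.exp 1 + 1) * c)), by positivity,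
    fun t ht => ?_⟩
  set G := {x : EuclideanSpace ℝ (Fin n) | t < powerProfile μ ν ‖x‖} \ Metric.closedBall 0 1
  have hG : ∀ x ∈ G, ‖x‖ ∈ {r : ℝ | 1 ≤ r ∧ gaussBallGrowth n r ≤ c / t} := by
    rintro x ⟨hx, hx1⟩
    rw [mem_closedBall_zero_iff, not_le] at hx1
    refine ⟨hx1.le, (le_div_iff₀ ht).2 ?_⟩
    calc gaussBallGrowth n ‖x‖ * t ≤ gaussBallGrowth n ‖x‖ * powerProfile μ ν ‖x‖ :=
          mul_le_mul_of_nonneg_left hx.le (gaussBallGrowth_pos (by linarith)).le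
      _ ≤ c := by rw [mul_comm]; exact powerProfile_mul_gaussBallGrowth_le hμν hx1.le
  rcases G.eq_empty_or_nonempty with hempty | ⟨x₀, hx₀⟩
  · simp [hempty]
  obtain ⟨S, ⟨hS1, hSc⟩, hSmax⟩ := exists_isGreatest_gaussBallGrowth_le hn ⟨_, hG x₀ hx₀⟩
  have hsub : G ⊆ Metric.closedBall 0 S := fun x hx => mem_closedBall_zero_iff.2 (hSmax (hG x hx))
  calc gaussM n G ≤ gaussM n (Metric.closedBall 0 S) := measure_mono hsub
    _ ≤ ENNReal.ofReal (Real.pi ^ ((n : ℝ) / 2) *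
          (n * vb * ((Real.exp 1 + 1) * gaussBallGrowth n S))) :=
      gaussM_closedBall_le_gaussBallGrowth hn hS1
    _ ≤ ENNReal.ofReal (Real.pi ^ ((n : ℝ) / 2) * (n * vb * ((Real.exp 1 + 1) * (c / t)))) := by
      gcongr
    _ = ENNReal.ofReal (Real.pi ^ ((n : ℝ) / 2) * (n * vb * ((Real.exp 1 + 1) * c)) / t) := by
      ring_nf

lemma gaussM_superlevel_le (hn : 1 ≤ n) (hμν : (n : ℝ) - 2 ≤ μ + ν) (hμ : μ ≤ n) :
    ∃ C, ∀ t, 0 < t → gaussM n {x : EuclideanSpace ℝ (Fin n) | t < powerProfile μ ν ‖x‖} ≤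
      ENNReal.ofReal (C / t) := by
  obtain ⟨C₁, hC₁, hnear⟩ := gaussM_superlevel_inter_closedBall_le (ν := ν) hn hμ
  obtain ⟨C₂, hC₂, hfar⟩ := gaussM_superlevel_diff_closedBall_le hn hμν
  refine ⟨C₁ + C₂, fun t ht => ?_⟩
  set G := {x : EuclideanSpace ℝ (Fin n) | t < powerProfile μ ν ‖x‖}
  calc gaussM n G
      ≤ gaussM n (G ∩ Metric.closedBall 0 1) + gaussM n (G \ Metric.closedBall 0 1) := by
        conv_lhs => rw [← inter_union_sdiff G (Metric.closedBall 0 1)]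
        exact measure_union_le _ _
    _ ≤ ENNReal.ofReal (C₁ / t) + ENNReal.ofReal (C₂ / t) := add_le_add (hnear t ht) (hfar t ht)
    _ = ENNReal.ofReal ((C₁ + C₂) / t) := by
        rw [← ENNReal.ofReal_add (by positivity) (by positivity), add_div]

end superlevel

lemma weakType11_of_gaussM_superlevel_le {n : ℕ} {g : EuclideanSpace ℝ (Fin n) → ℝ}
    (hg : ∀ x, 0 ≤ g x) {C : ℝ}
    (hC : ∀ t, 0 < t → gaussM n {x | t < g x} ≤ ENNReal.ofReal (C / t)) :
    WeakType11 fun x y => g x * Real.exp (‖y‖ ^ 2) := by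
  refine ⟨C / Real.pi ^ ((n : ℝ) / 2), fun f _ s hs => ?_⟩
  set B := ∫ y, Real.exp (‖y‖ ^ 2) * |f y|
  have hπ : 0 < Real.pi ^ ((n : ℝ) / 2) := by positivity
  have hB : 0 ≤ B := integral_nonneg fun y => by positivity
  have hTf : ∀ x, |∫ y, g x * Real.exp (‖y‖ ^ 2) * f y| ≤ g x * B := fun x => by
    simp_rw [mul_assoc, integral_const_mul, abs_mul, abs_of_nonneg (hg x)]
    refine mul_le_mul_of_nonneg_left (abs_integral_le_integral_abs.trans_eq ?_) (hg x)
    simp_rw [abs_mul, abs_of_pos (Real.exp_pos _), B]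
  rw [integral_gaussM, show C / Real.pi ^ ((n : ℝ) / 2) / s * (Real.pi ^ ((n : ℝ) / 2) * B) =
    C / (s / B) by field_simp]
  rcases hB.eq_or_lt with hB0 | hBpos
  · refine (measure_mono_null (fun x (hx : s < _) => ?_) measure_empty).trans_le zero_le
    have hx' := hx.trans_le (hTf x)
    rw [← hB0, mul_zero] at hx'
    exact absurd hx' hs.le.not_gt
  refine (measure_mono fun x (hx : s < _) => ?_).trans (hC _ (by positivity))
  exact (div_lt_iff₀ hBpos).2 (hx.trans_le (hTf x))

/-- for μ + ν ≥ n − 2 and μ ≤ n, the operator with kernel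
e^{-|x|²+|y|²}|x|^{-μ}(1+|x|)^{-ν} is of weak type (1,1) w.r.t. γ₋₁. -/
theorem power_kernel_weak_type (n : ℕ) (hn : 1 ≤ n) (μ ν : ℝ)
    (h1 : (n : ℝ) - 2 ≤ μ + ν) (h2 : μ ≤ n) :
    WeakType11 (fun x y : EuclideanSpace ℝ (Fin n) =>
      Real.exp (-‖x‖ ^ 2 + ‖y‖ ^ 2) * ‖x‖ ^ (-μ) * (1 + ‖x‖) ^ (-ν)) := by
  have hkernel : (fun x y : EuclideanSpace ℝ (Fin n) =>
      Real.exp (-‖x‖ ^ 2 + ‖y‖ ^ 2) * ‖x‖ ^ (-μ) * (1 + ‖x‖) ^ (-ν)) =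
      fun x y => powerProfile μ ν ‖x‖ * Real.exp (‖y‖ ^ 2) := by
    ext x y
    rw [Real.exp_add, powerProfile]
    ring
  obtain ⟨C, hC⟩ := gaussM_superlevel_le hn h1 h2
  rw [hkernel]
  exact weakType11_of_gaussM_superlevel_le (fun x => powerProfile_nonneg (norm_nonneg x)) hC
end

section
/- Let n ≥ 1 and let μ, ν ≥ 0 be such that μ > ν + 1. Then there is a constant C (depending only on n, μ, ν) such that for every (x,y) ∈ N_2 with x ≠ y, ∫_0^1 |x−ry|^ν (1−r^2)^{−(n+μ)/2} e^{−|x−ry|^2/(1−r^2)} dr ≤ C |x−y|^{−(n+μ−ν−2)}. -/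
/-!
Write `t = 1 - r²` and `u = |x - r y|`. Spending half of the Gaussian factor to absorb `u ^ ν`
bounds the integrand by a constant times `t ^ (-β) * exp (-u² / (2 t))`, where
`β = (n + μ - ν) / 2 > 1`. On all of `(0, 1)` this is `O((1 - r) ^ (-β))`, whose integral over
`(0, 1 - δ)` is `O(δ ^ (1 - β))`. On the last interval, of length `δ = |x - y|² / 4`, the condition
`(x, y) ∈ N₂` keeps `u ≥ |x - y| / 2`, so there the integrand is `O(δ ^ (-β))`. Both pieces are
`O(δ ^ (1 - β)) = O(|x - y| ^ (-(n + μ - ν - 2)))`.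
-/

open MeasureTheory Real Filter Set

theorem rpow_mul_exp_neg_le {p s : ℝ} (hp : 0 ≤ p) (hs : 0 ≤ s) :
    s ^ p * exp (-s) ≤ p ^ p * exp (-p) := by
  rcases hp.eq_or_lt with rfl | hp
  · simpa using hs
  have hsp : s / p ≤ exp (s / p - 1) := by linarith [add_one_le_exp (s / p - 1)]
  have hpow : (s / p) ^ p ≤ exp (s - p) := by
    calc (s / p) ^ p ≤ exp (s / p - 1) ^ p := by gcongr
      _ = exp (s - p) := by rw [← exp_mul]; congr 1; field_simp
  calc s ^ p * exp (-s) = p ^ p * (s / p) ^ p * exp (-s) := by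
        rw [div_rpow hs hp.le]; field_simp
    _ ≤ p ^ p * exp (s - p) * exp (-s) := by gcongr
    _ = p ^ p * exp (-p) := by rw [mul_assoc, ← exp_add]; ring_nf

theorem rpow_mul_exp_neg_div_le {p s t : ℝ} (hp : 0 ≤ p) (hs : 0 ≤ s) (ht : 0 < t) :
    s ^ p * exp (-(s / t)) ≤ (p * t) ^ p * exp (-p) := by
  calc s ^ p * exp (-(s / t)) = t ^ p * ((s / t) ^ p * exp (-(s / t))) := by
        rw [div_rpow hs ht.le]; field_simp
    _ ≤ t ^ p * (p ^ p * exp (-p)) :=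
        mul_le_mul_of_nonneg_left (rpow_mul_exp_neg_le hp (by positivity)) (by positivity)
    _ = (p * t) ^ p * exp (-p) := by rw [mul_rpow hp ht.le]; ring

theorem rpow_neg_mul_exp_neg_div_le {β s t : ℝ} (hβ : 0 ≤ β) (hs : 0 < s) (ht : 0 < t) :
    t ^ (-β) * exp (-(s / t)) ≤ β ^ β * exp (-β) * s ^ (-β) := by
  have h := rpow_mul_exp_neg_div_le hβ hs.le ht
  rw [mul_rpow hβ ht.le] at h
  rw [rpow_neg ht.le, rpow_neg hs.le, ← div_eq_inv_mul, div_le_iff₀ (by positivity)]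
  calc exp (-(s / t)) = s ^ β * exp (-(s / t)) / s ^ β := by field_simp
    _ ≤ β ^ β * t ^ β * exp (-β) / s ^ β := by gcongr
    _ = _ := by field_simp

/-- The integrand, as a function of `u = ‖x - r • y‖` and `t = 1 - r ^ 2`, with
`(n + μ) / 2 = β + ν / 2`. -/
noncomputable def mehlerWeight (ν β u t : ℝ) : ℝ :=
  u ^ ν * t ^ (-(β + ν / 2)) * exp (-u ^ 2 / t)

section mehlerWeight

variable {ν β u t : ℝ}

theorem mehlerWeight_nonneg (hu : 0 ≤ u) (ht : 0 ≤ t) : 0 ≤ mehlerWeight ν β u t := by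
  unfold mehlerWeight; positivity

theorem mehlerWeight_le (hν : 0 ≤ ν) (hu : 0 ≤ u) (ht : 0 < t) :
    mehlerWeight ν β u t ≤
      ν ^ (ν / 2) * exp (-(ν / 2)) * t ^ (-β) * exp (-(u ^ 2 / (2 * t))) := by
  have hhalf : u ^ ν * exp (-(u ^ 2 / (2 * t))) ≤ ν ^ (ν / 2) * exp (-(ν / 2)) * t ^ (ν / 2) := by
    have h := rpow_mul_exp_neg_div_le (p := ν / 2) (by positivity) (sq_nonneg u)
      (by positivity : 0 < 2 * t)
    have hsq : (u ^ 2) ^ (ν / 2) = u ^ ν := by rw [← rpow_natCast_mul hu]; congr 1; push_cast; ring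
    rwa [hsq, show ν / 2 * (2 * t) = ν * t by ring, mul_rpow hν ht.le, mul_right_comm] at h
  have hsplit : exp (-u ^ 2 / t) = exp (-(u ^ 2 / (2 * t))) * exp (-(u ^ 2 / (2 * t))) := by
    rw [← exp_add]; congr 1; field_simp; ring
  calc mehlerWeight ν β u t
      = u ^ ν * exp (-(u ^ 2 / (2 * t))) * t ^ (-(β + ν / 2)) * exp (-(u ^ 2 / (2 * t))) := by
        rw [mehlerWeight, hsplit]; ring
    _ ≤ ν ^ (ν / 2) * exp (-(ν / 2)) * t ^ (ν / 2) * t ^ (-(β + ν / 2)) *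
          exp (-(u ^ 2 / (2 * t))) := by gcongr
    _ = _ := by rw [mul_assoc _ (t ^ (ν / 2)), ← rpow_add ht]; ring_nf

theorem mehlerWeight_le_rpow_neg {s : ℝ} (hν : 0 ≤ ν) (hβ : 0 ≤ β) (hu : 0 ≤ u) (hs : 0 < s)
    (hst : s ≤ t) : mehlerWeight ν β u t ≤ ν ^ (ν / 2) * exp (-(ν / 2)) * s ^ (-β) := by
  have ht : 0 < t := hs.trans_le hst
  calc mehlerWeight ν β u t
      ≤ ν ^ (ν / 2) * exp (-(ν / 2)) * t ^ (-β) * exp (-(u ^ 2 / (2 * t))) :=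
        mehlerWeight_le hν hu ht
    _ ≤ ν ^ (ν / 2) * exp (-(ν / 2)) * s ^ (-β) * 1 := by
        have hpow : t ^ (-β) ≤ s ^ (-β) := rpow_le_rpow_of_nonpos hs hst (neg_nonpos.2 hβ)
        have hexp : exp (-(u ^ 2 / (2 * t))) ≤ 1 := exp_le_one_iff.2 (neg_nonpos.2 (by positivity))
        gcongr
    _ = _ := mul_one _

theorem mehlerWeight_le_of_le_sq {δ : ℝ} (hν : 0 ≤ ν) (hβ : 0 ≤ β) (hu : 0 ≤ u) (ht : 0 < t)
    (hδ : 0 < δ) (hδu : δ ≤ u ^ 2) :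
    mehlerWeight ν β u t ≤ ν ^ (ν / 2) * exp (-(ν / 2)) * ((2 * β) ^ β * exp (-β)) * δ ^ (-β) := by
  have hdecay : t ^ (-β) * exp (-(u ^ 2 / (2 * t))) ≤ (2 * β) ^ β * exp (-β) * δ ^ (-β) := by
    calc t ^ (-β) * exp (-(u ^ 2 / (2 * t))) ≤ t ^ (-β) * exp (-(δ / 2 / t)) := by
          have : δ / 2 / t ≤ u ^ 2 / (2 * t) := by rw [div_div]; gcongr
          gcongr
      _ ≤ β ^ β * exp (-β) * (δ / 2) ^ (-β) := rpow_neg_mul_exp_neg_div_le hβ (by positivity) ht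
      _ = _ := by
        rw [mul_rpow (by norm_num) hβ, div_rpow hδ.le (by norm_num), rpow_neg hδ.le,
          rpow_neg (by positivity)]
        field_simp
  calc mehlerWeight ν β u t
      ≤ ν ^ (ν / 2) * exp (-(ν / 2)) * t ^ (-β) * exp (-(u ^ 2 / (2 * t))) :=
        mehlerWeight_le hν hu ht
    _ ≤ _ := by rw [mul_assoc _ (t ^ (-β)), mul_assoc _ (_ * _) (δ ^ (-β))]; gcongr

end mehlerWeight

theorem half_norm_sub_le_norm_sub_smul {E : Type*} [SeminormedAddCommGroup E] [NormedSpace ℝ E]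
    {x y : E} {r : ℝ} (hy : ‖x - y‖ * ‖y‖ ≤ 2) (hr : 1 - ‖x - y‖ ^ 2 / 4 ≤ r) (hr1 : r ≤ 1) :
    ‖x - y‖ / 2 ≤ ‖x - r • y‖ := by
  have htri : ‖x - y‖ ≤ ‖x - r • y‖ + (1 - r) * ‖y‖ :=
    calc ‖x - y‖ = ‖(x - r • y) - (1 - r) • y‖ := by rw [sub_smul, one_smul]; abel_nf
      _ ≤ ‖x - r • y‖ + ‖(1 - r) • y‖ := norm_sub_le _ _
      _ = ‖x - r • y‖ + (1 - r) * ‖y‖ := by rw [norm_smul, norm_of_nonneg (sub_nonneg.2 hr1)]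
  have hshift : (1 - r) * ‖y‖ ≤ ‖x - y‖ / 2 := by
    nlinarith [mul_le_mul_of_nonneg_right (sub_le_comm.1 hr) (norm_nonneg y),
      mul_le_mul_of_nonneg_left hy (norm_nonneg (x - y))]
  linarith

theorem norm_sub_le_and_mul_norm_le_of_mem_Nset {n : ℕ} {δ : ℝ} {x y : EuclideanSpace ℝ (Fin n)}
    (h : (x, y) ∈ Nset n δ) : ‖x - y‖ ≤ δ ∧ ‖x - y‖ * ‖y‖ ≤ δ := by
  have hmul : ‖x - y‖ * (1 + ‖x‖ + ‖y‖) ≤ δ := (le_div_iff₀ (by positivity)).1 h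
  constructor <;> nlinarith [norm_nonneg (x - y), norm_nonneg x, norm_nonneg y]

theorem integral_one_sub_rpow_neg_le {β δ : ℝ} (hβ : 1 < β) (hδ : 0 < δ) :
    ∫ r in (0 : ℝ)..1 - δ, (1 - r) ^ (-β) ≤ δ ^ (1 - β) / (β - 1) := by
  have hne : -β ≠ -1 := by intro h; linarith [neg_inj.1 h]
  have h0 : (0 : ℝ) ∉ uIcc δ 1 := notMem_uIcc_of_lt hδ one_pos
  rw [intervalIntegral.integral_comp_sub_left (fun u => u ^ (-β)), sub_sub_cancel, sub_zero,
    integral_rpow (Or.inr ⟨hne, h0⟩), one_rpow, show -β + 1 = 1 - β by ring,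
    ← neg_div_neg_eq, neg_sub, neg_sub]
  gcongr
  exact sub_le_self _ zero_le_one

theorem setIntegral_Ioo_le_of_le_rpow_neg {f : ℝ → ℝ} {A B β δ : ℝ} (hβ : 1 < β) (hA : 0 ≤ A)
    (hδ : 0 < δ) (hδ1 : δ ≤ 1) (hf : ∀ r ∈ Ioo 0 1, 0 ≤ f r)
    (hnear : ∀ r ∈ Ioo 0 1, f r ≤ A * (1 - r) ^ (-β))
    (hfar : ∀ r ∈ Ioo (1 - δ) 1, f r ≤ B * δ ^ (-β)) :
    ∫ r in Ioo 0 1, f r ≤ (A / (β - 1) + B) * δ ^ (1 - β) := by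
  set m := 1 - δ with hm
  set g : ℝ → ℝ := fun r => if r ≤ m then A * (1 - r) ^ (-β) else B * δ ^ (-β)
  have hg_near : EqOn (fun r => A * (1 - r) ^ (-β)) g (Ioc 0 m) := fun r hr => (if_pos hr.2).symm
  have hg_far : EqOn (fun _ => B * δ ^ (-β)) g (Ioo m 1) := fun r hr => (if_neg hr.1.not_ge).symm
  have hint_near : IntegrableOn g (Ioc 0 m) := by
    refine (ContinuousOn.integrableOn_Icc ?_).mono_set Ioc_subset_Icc_self
      |>.congr_fun hg_near measurableSet_Ioc
    refine continuousOn_const.mul (ContinuousOn.rpow_const (by fun_prop) fun r hr => ?_)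
    exact Or.inl (by linarith [hr.2])
  have hint_far : IntegrableOn g (Ioo m 1) :=
    (integrableOn_const measure_Ioo_lt_top.ne).congr_fun hg_far measurableSet_Ioo
  have hunion : Ioc 0 m ∪ Ioo m 1 = Ioo 0 1 := Ioc_union_Ioo_eq_Ioo (by linarith) (by linarith)
  have hdisj : Disjoint (Ioc 0 m) (Ioo m 1) :=
    disjoint_left.2 fun r hr hr' => hr'.1.not_ge hr.2
  have hfg : ∀ r ∈ Ioo 0 1, f r ≤ g r := by
    intro r hr
    by_cases hrm : r ≤ m
    · rw [← hg_near ⟨hr.1, hrm⟩]; exact hnear r hr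
    · rw [← hg_far ⟨not_le.1 hrm, hr.2⟩]; exact hfar r ⟨not_le.1 hrm, hr.2⟩
  calc ∫ r in Ioo 0 1, f r ≤ ∫ r in Ioo 0 1, g r :=
        integral_mono_of_nonneg (ae_restrict_of_forall_mem measurableSet_Ioo hf)
          (hunion ▸ hint_near.union hint_far) (ae_restrict_of_forall_mem measurableSet_Ioo hfg)
    _ = (∫ r in Ioc 0 m, g r) + ∫ r in Ioo m 1, g r := by
        rw [← hunion, setIntegral_union hdisj measurableSet_Ioo hint_near hint_far]
    _ = A * (∫ r in (0 : ℝ)..m, (1 - r) ^ (-β)) + δ * (B * δ ^ (-β)) := by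
        rw [← setIntegral_congr_fun measurableSet_Ioc hg_near,
          ← setIntegral_congr_fun measurableSet_Ioo hg_far, setIntegral_const, volume_real_Ioo,
          ← intervalIntegral.integral_of_le (by linarith), intervalIntegral.integral_const_mul,
          smul_eq_mul, hm, sub_sub_cancel, max_eq_left hδ.le]
    _ ≤ A * (δ ^ (1 - β) / (β - 1)) + δ * (B * δ ^ (-β)) := by
        gcongr; exact integral_one_sub_rpow_neg_le hβ hδ
    _ = (A / (β - 1) + B) * δ ^ (1 - β) := by
        rw [rpow_sub hδ, rpow_one, rpow_neg hδ.le]; field_simp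

theorem integral_mehlerWeight_le {E : Type*} [SeminormedAddCommGroup E] [NormedSpace ℝ E]
    {x y : E} {ν β : ℝ} (hν : 0 ≤ ν) (hβ : 1 < β) (hxy : 0 < ‖x - y‖) (hxy2 : ‖x - y‖ ≤ 2)
    (hxyy : ‖x - y‖ * ‖y‖ ≤ 2) :
    ∫ r in Ioo 0 1, mehlerWeight ν β ‖x - r • y‖ (1 - r ^ 2) ≤
      (ν ^ (ν / 2) * exp (-(ν / 2)) / (β - 1) +
        ν ^ (ν / 2) * exp (-(ν / 2)) * ((2 * β) ^ β * exp (-β))) * (‖x - y‖ ^ 2 / 4) ^ (1 - β) := by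
  have hδ1 : ‖x - y‖ ^ 2 / 4 ≤ 1 := by nlinarith
  exact setIntegral_Ioo_le_of_le_rpow_neg hβ (by positivity) (by positivity) hδ1
    (fun r hr => mehlerWeight_nonneg (norm_nonneg _) (by nlinarith [hr.1, hr.2]))
    (fun r hr => mehlerWeight_le_rpow_neg hν (by linarith) (norm_nonneg _) (by linarith [hr.2])
      (by nlinarith [hr.1, hr.2]))
    (fun r hr => mehlerWeight_le_of_le_sq hν (by linarith) (norm_nonneg _)
      (by nlinarith [hr.1, hr.2]) (by positivity)
      (by nlinarith [half_norm_sub_le_norm_sub_smul hxyy hr.1.le hr.2.le]))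

theorem local_integral_estimate_general (n : ℕ) (hn : 1 ≤ n) (μ ν : ℝ)
    (hν : 0 ≤ ν) (h : ν + 1 < μ) :
    ∃ C : ℝ, ∀ x y : EuclideanSpace ℝ (Fin n), (x, y) ∈ Nset n 2 → x ≠ y →
      (∫ r in Set.Ioo (0 : ℝ) 1,
          ‖x - r • y‖ ^ ν * (1 - r ^ 2) ^ (-(((n : ℝ) + μ) / 2)) *
            Real.exp (-‖x - r • y‖ ^ 2 / (1 - r ^ 2))) ≤
        C * ‖x - y‖ ^ (-((n : ℝ) + μ - ν - 2)) := by
  set β : ℝ := ((n : ℝ) + μ - ν) / 2 with hβ_def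
  have hβ : 1 < β := by
    have : (1 : ℝ) ≤ n := by exact_mod_cast hn
    rw [hβ_def]; linarith
  have hexp : β + ν / 2 = ((n : ℝ) + μ) / 2 := by rw [hβ_def]; ring
  set K := ν ^ (ν / 2) * exp (-(ν / 2))
  set M := K / (β - 1) + K * ((2 * β) ^ β * exp (-β))
  refine ⟨M / 4 ^ (1 - β), fun x y hxy hne => ?_⟩
  obtain ⟨hdist, hdist_mul⟩ := norm_sub_le_and_mul_norm_le_of_mem_Nset hxy
  have ha : 0 < ‖x - y‖ := norm_sub_pos_iff.2 hne
  have hpow : ‖x - y‖ ^ (-((n : ℝ) + μ - ν - 2)) = 4 ^ (1 - β) * (‖x - y‖ ^ 2 / 4) ^ (1 - β) := by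
    rw [← mul_rpow (by norm_num) (by positivity), mul_div_cancel₀ _ (by norm_num),
      ← rpow_natCast_mul ha.le]
    congr 1; push_cast; ring
  have hweight : ∀ r : ℝ, ‖x - r • y‖ ^ ν * (1 - r ^ 2) ^ (-(((n : ℝ) + μ) / 2)) *
      exp (-‖x - r • y‖ ^ 2 / (1 - r ^ 2)) = mehlerWeight ν β ‖x - r • y‖ (1 - r ^ 2) := by
    intro r; rw [mehlerWeight, hexp]
  simp_rw [hweight, hpow]
  calc _ ≤ M * (‖x - y‖ ^ 2 / 4) ^ (1 - β) := integral_mehlerWeight_le hν hβ ha hdist hdist_mul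
    _ = M / 4 ^ (1 - β) * (4 ^ (1 - β) * (‖x - y‖ ^ 2 / 4) ^ (1 - β)) := by field_simp

/-- local integral estimate: for μ > ν + 1, μ, ν ≥ 0 and (x,y) ∈ N₂,
∫₀¹ |x−ry|^ν (1−r²)^{-(n+μ)/2} e^{-|x−ry|²/(1−r²)} dr ≲ |x−y|^{-(n+μ−ν−2)}. -/
theorem local_integral_estimate (n : ℕ) (hn : 1 ≤ n) (μ ν : ℝ)
    (hμ : 0 ≤ μ) (hν : 0 ≤ ν) (h : ν + 1 < μ) :
    ∃ C : ℝ, ∀ x y : EuclideanSpace ℝ (Fin n), (x, y) ∈ Nset n 2 → x ≠ y →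
      (∫ r in Set.Ioo (0 : ℝ) 1,
          ‖x - r • y‖ ^ ν * (1 - r ^ 2) ^ (-(((n : ℝ) + μ) / 2)) *
            Real.exp (-‖x - r • y‖ ^ 2 / (1 - r ^ 2))) ≤
        C * ‖x - y‖ ^ (-((n : ℝ) + μ - ν - 2)) :=
  local_integral_estimate_general n hn μ ν hν h
end

section
/- Let n ≥ 1 and let α ∈ ℕ^n be a nonzero multi-index. Then there is a constant C (depending only on n and α) such that |K_α(x,y)| ≤ C |x−y|^{−n} for every (x,y) ∈ N_2 with x ≠ y. -/
open MeasureTheory Real Filter Set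

/-!
Write `t = ‖x - y‖`. On `N₂` one has `t ‖y‖ ≤ 2`, hence `‖x - r y‖² ≥ t² - 4 (1 - r)`; since the
Hermite product grows at most like `exp (|z|² / 2)`, the integrand of `K_α` is bounded by a multiple
of `r ^ (n-1) (-log r) ^ (|α|/2 - 1) (1 - r²) ^ (-(n+|α|)/2) exp (-t² / (4 (1 - r)))`.
Away from `r = 1` this is dominated by `r ^ (-1/2)`, and near `r = 1`, where `-log r ≍ 1 - r`, by
`(1 - r) ^ (-n/2 - 1) exp (-t² / (4 (1 - r)))`, whose integral over `(0, ∞)` is `Γ(n/2) (2/t)ⁿ`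
by the substitution `s ↦ 1/s`.
-/

theorem exists_iteratedDeriv_exp_neg_sq_eq (k : ℕ) : ∃ p : Polynomial ℝ,
    iteratedDeriv k (fun t => exp (-t ^ 2)) = fun s => p.eval s * exp (-s ^ 2) := by
  induction k with
  | zero => exact ⟨1, by simp⟩
  | succ k ih =>
    obtain ⟨p, hp⟩ := ih
    refine ⟨Polynomial.derivative p - Polynomial.C 2 * Polynomial.X * p, funext fun s => ?_⟩
    have hgauss : HasDerivAt (fun s : ℝ => exp (-s ^ 2)) (-2 * s * exp (-s ^ 2)) s := by
      simpa [mul_comm] using ((hasDerivAt_pow 2 s).neg).exp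
    rw [iteratedDeriv_succ, hp, ((Polynomial.hasDerivAt p s).fun_mul hgauss).deriv]
    simp only [Polynomial.eval_sub, Polynomial.eval_mul, Polynomial.eval_C, Polynomial.eval_X]
    ring

theorem exists_hermiteH_eq_eval (k : ℕ) : ∃ p : Polynomial ℝ, ∀ s, hermiteH k s = p.eval s := by
  obtain ⟨p, hp⟩ := exists_iteratedDeriv_exp_neg_sq_eq k
  refine ⟨Polynomial.C ((-1) ^ k) * p, fun s => ?_⟩
  have hexp : exp (s ^ 2) * exp (-s ^ 2) = 1 := by rw [← exp_add, add_neg_cancel, exp_zero]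
  rw [hermiteH, hp, Polynomial.eval_mul, Polynomial.eval_C]
  linear_combination (-1) ^ k * p.eval s * hexp

theorem Polynomial.exists_abs_eval_le_mul_exp_sq_half (p : Polynomial ℝ) :
    ∃ M, 0 ≤ M ∧ ∀ s, |p.eval s| ≤ M * exp (s ^ 2 / 2) := by
  set K := ∑ i ∈ Finset.range (p.natDegree + 1), |p.coeff i| * i.factorial
  refine ⟨K * exp (1 / 2), by positivity, fun s => ?_⟩
  have hpow (i : ℕ) : |s| ^ i ≤ i.factorial * exp |s| := by
    have := pow_div_factorial_le_exp (x := |s|) (abs_nonneg s) i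
    rwa [div_le_iff₀ (by positivity), mul_comm] at this
  have habs : exp |s| ≤ exp (1 / 2) * exp (s ^ 2 / 2) := by
    rw [← exp_add, exp_le_exp]
    nlinarith [sq_abs s, sq_nonneg (|s| - 1)]
  calc |p.eval s| ≤ ∑ i ∈ Finset.range (p.natDegree + 1), |p.coeff i| * |s| ^ i := by
        rw [Polynomial.eval_eq_sum_range]
        refine (Finset.abs_sum_le_sum_abs _ _).trans_eq ?_
        simp only [abs_mul, abs_pow]
    _ ≤ ∑ i ∈ Finset.range (p.natDegree + 1), |p.coeff i| * (i.factorial * exp |s|) := by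
        gcongr with i; exact hpow i
    _ = K * exp |s| := by simp only [K, Finset.sum_mul, mul_assoc]
    _ ≤ K * (exp (1 / 2) * exp (s ^ 2 / 2)) := by gcongr
    _ = K * exp (1 / 2) * exp (s ^ 2 / 2) := by ring

theorem exists_abs_prod_hermiteH_le {ι : Type*} [Fintype ι] (α : ι → ℕ) :
    ∃ M, 0 ≤ M ∧ ∀ z : ι → ℝ,
      |∏ j, hermiteH (α j) (z j)| ≤ M * exp ((∑ j, z j ^ 2) / 2) := by
  have (j : ι) : ∃ M, 0 ≤ M ∧ ∀ s, |hermiteH (α j) s| ≤ M * exp (s ^ 2 / 2) := by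
    obtain ⟨p, hp⟩ := exists_hermiteH_eq_eval (α j)
    simpa only [hp] using p.exists_abs_eval_le_mul_exp_sq_half
  choose M hM0 hM using this
  refine ⟨∏ j, M j, Finset.prod_nonneg fun j _ => hM0 j, fun z => ?_⟩
  rw [Finset.abs_prod, Finset.sum_div, exp_sum, ← Finset.prod_mul_distrib]
  exact Finset.prod_le_prod (fun j _ => abs_nonneg _) fun j _ => hM j (z j)

theorem abs_prod_hermiteH_mul_exp_le {ι : Type*} [Fintype ι] {α : ι → ℕ} {M : ℝ}
    (hM : ∀ z : ι → ℝ, |∏ j, hermiteH (α j) (z j)| ≤ M * exp ((∑ j, z j ^ 2) / 2))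
    (v : EuclideanSpace ℝ ι) {u : ℝ} (hu : 0 < u) :
    |∏ j, hermiteH (α j) (v j / √u)| * exp (-‖v‖ ^ 2 / u) ≤ M * exp (-‖v‖ ^ 2 / (2 * u)) := by
  have hz : (∑ j, (v j / √u) ^ 2) = ‖v‖ ^ 2 / u := by
    simp only [EuclideanSpace.real_norm_sq_eq, div_pow, sq_sqrt hu.le, Finset.sum_div]
  calc |∏ j, hermiteH (α j) (v j / √u)| * exp (-‖v‖ ^ 2 / u)
      ≤ M * exp (‖v‖ ^ 2 / u / 2) * exp (-‖v‖ ^ 2 / u) := by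
        gcongr; simpa only [hz] using hM fun j => v j / √u
    _ = M * exp (-‖v‖ ^ 2 / (2 * u)) := by
        rw [mul_assoc, ← exp_add]; congr 2; field_simp; ring

theorem norm_sub_sq_sub_le_norm_sub_smul_sq {E : Type*} [NormedAddCommGroup E]
    [InnerProductSpace ℝ E] (x y : E) {r : ℝ} (hr : r ≤ 1) :
    ‖x - y‖ ^ 2 - 2 * (1 - r) * (‖x - y‖ * ‖y‖) ≤ ‖x - r • y‖ ^ 2 := by
  have hinner : -(‖x - y‖ * ‖y‖) ≤ inner ℝ (x - y) y :=
    neg_le_of_abs_le (abs_real_inner_le_norm _ _)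
  rw [show x - r • y = (x - y) + (1 - r) • y by module, norm_add_sq_real, real_inner_smul_right]
  nlinarith [sq_nonneg ‖(1 - r) • y‖]

theorem exp_neg_norm_sub_smul_sq_div_le {E : Type*} [NormedAddCommGroup E]
    [InnerProductSpace ℝ E] {x y : E} (hxy : ‖x - y‖ * ‖y‖ ≤ 2) {r : ℝ} (hr : r ∈ Ioo (0 : ℝ) 1) :
    exp (-‖x - r • y‖ ^ 2 / (2 * (1 - r ^ 2))) ≤
      exp 2 * exp (-(‖x - y‖ ^ 2 / 4) / (1 - r)) := by
  obtain ⟨hr0, hr1⟩ := hr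
  have hS : ‖x - y‖ ^ 2 - 4 * (1 - r) ≤ ‖x - r • y‖ ^ 2 := by
    nlinarith [norm_sub_sq_sub_le_norm_sub_smul_sq x y hr1.le]
  have hu : 0 < 1 - r ^ 2 := by nlinarith
  have h1 : -‖x - r • y‖ ^ 2 / (2 * (1 - r ^ 2)) ≤
      4 * (1 - r) / (2 * (1 - r ^ 2)) - ‖x - y‖ ^ 2 / (2 * (1 - r ^ 2)) := by
    rw [← sub_div]; gcongr; linarith
  have h2 : 4 * (1 - r) / (2 * (1 - r ^ 2)) ≤ 2 := by
    rw [div_le_iff₀ (by positivity)]; nlinarith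
  have h3 : ‖x - y‖ ^ 2 / 4 / (1 - r) ≤ ‖x - y‖ ^ 2 / (2 * (1 - r ^ 2)) := by
    rw [div_div]
    exact div_le_div_of_nonneg_left (sq_nonneg _) (by positivity) (by nlinarith)
  rw [← exp_add, exp_le_exp]
  simp only [neg_div] at h1 ⊢
  linarith

theorem rpow_le_rpow_abs_mul_rpow {x y K : ℝ} (a : ℝ) (hx : 0 < x) (hxy : x ≤ y)
    (hyK : y ≤ K * x) : y ^ a ≤ K ^ |a| * x ^ a := by
  have hK : 1 ≤ K := le_of_mul_le_mul_right (by linarith) hx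
  rcases le_total 0 a with ha | ha
  · rw [abs_of_nonneg ha, ← mul_rpow (by linarith) hx.le]
    exact rpow_le_rpow (by linarith) hyK ha
  · calc y ^ a ≤ x ^ a := rpow_le_rpow_of_nonpos hx hxy ha
      _ ≤ K ^ |a| * x ^ a :=
          le_mul_of_one_le_left (rpow_nonneg hx.le _) (one_le_rpow hK (abs_nonneg a))

theorem exists_neg_log_rpow_le_mul_rpow_neg_half (a : ℝ) :
    ∃ C, 0 ≤ C ∧ ∀ r ∈ Ioc (0 : ℝ) (1 / 2), (-log r) ^ a ≤ C * r ^ (-(1 / 2) : ℝ) := by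
  rcases le_or_gt a 0 with ha | ha
  · refine ⟨log 2 ^ a, rpow_nonneg (log_pos one_lt_two).le _, fun r ⟨hr0, hr⟩ => ?_⟩
    have hlog : log 2 ≤ -log r := by
      rw [← log_inv]; exact log_le_log two_pos (by rw [le_inv_comm₀ two_pos hr0]; linarith)
    calc (-log r) ^ a ≤ log 2 ^ a := rpow_le_rpow_of_nonpos (log_pos one_lt_two) hlog ha
      _ ≤ log 2 ^ a * r ^ (-(1 / 2) : ℝ) := le_mul_of_one_le_right
          (rpow_nonneg (log_pos one_lt_two).le _)
          (one_le_rpow_of_pos_of_le_one_of_nonpos hr0 (by linarith) (by norm_num))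
  · refine ⟨(2 * a) ^ a, by positivity, fun r ⟨hr0, hr⟩ => ?_⟩
    have hε : 0 < 1 / (2 * a) := by positivity
    -- `ε = 1 / (2a)` in `log x ≤ x ^ ε / ε`, so that the power `a` produces `r ^ (-1/2)`
    have hlog : -log r ≤ 2 * a * r⁻¹ ^ (1 / (2 * a)) := by
      rw [← log_inv]
      convert log_le_rpow_div (inv_pos.2 hr0).le hε using 1
      field_simp
    calc (-log r) ^ a ≤ (2 * a * r⁻¹ ^ (1 / (2 * a))) ^ a :=
          rpow_le_rpow (neg_nonneg.2 (log_nonpos hr0.le (by linarith))) hlog ha.le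
      _ = (2 * a) ^ a * r ^ (-(1 / 2) : ℝ) := by
          rw [mul_rpow (by positivity) (by positivity), ← rpow_mul (by positivity),
            inv_rpow hr0.le, ← rpow_neg hr0.le]
          congr 2
          field_simp

theorem neg_log_rpow_le_mul_one_sub_rpow (a : ℝ) {r : ℝ} (hr : r ∈ Ico (1 / 2 : ℝ) 1) :
    (-log r) ^ a ≤ 2 ^ |a| * (1 - r) ^ a := by
  obtain ⟨hr, hr1⟩ := hr
  have hr0 : 0 < r := by linarith
  refine rpow_le_rpow_abs_mul_rpow a (by linarith) (by linarith [log_le_sub_one_of_pos hr0]) ?_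
  have := one_sub_inv_le_log_of_pos hr0
  have : r⁻¹ ≤ 2 := by rw [inv_le_comm₀ hr0 two_pos]; linarith
  nlinarith [inv_mul_cancel₀ hr0.ne']

theorem exists_pow_mul_neg_log_rpow_mul_rpow_le (m : ℕ) (a : ℝ) {b : ℝ} (hb : 0 ≤ b) :
    ∃ C, 0 ≤ C ∧ ∀ r ∈ Ioo (0 : ℝ) 1,
      r ^ m * (-log r) ^ a * (1 - r ^ 2) ^ (-b) ≤
        C * (r ^ (-(1 / 2) : ℝ) + (1 - r) ^ (a - b)) := by
  obtain ⟨C₀, hC₀, hlog⟩ := exists_neg_log_rpow_le_mul_rpow_neg_half a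
  refine ⟨C₀ * (3 / 4) ^ (-b) + 2 ^ |a|, by positivity, fun r ⟨hr0, hr1⟩ => ?_⟩
  have hrm : r ^ m ≤ 1 := pow_le_one₀ hr0.le hr1.le
  have hu : 0 < 1 - r ^ 2 := by nlinarith
  have hlog0 : 0 ≤ -log r := neg_nonneg.2 (log_nonpos hr0.le hr1.le)
  have hsqrt0 : 0 ≤ r ^ (-(1 / 2) : ℝ) := rpow_nonneg hr0.le _
  have hsing0 : 0 ≤ (1 - r) ^ (a - b) := rpow_nonneg (by linarith) _
  calc r ^ m * (-log r) ^ a * (1 - r ^ 2) ^ (-b) ≤ (-log r) ^ a * (1 - r ^ 2) ^ (-b) := by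
        gcongr
        exact mul_le_of_le_one_left (rpow_nonneg hlog0 _) hrm
    _ ≤ C₀ * (3 / 4) ^ (-b) * r ^ (-(1 / 2) : ℝ) + 2 ^ |a| * (1 - r) ^ (a - b) := by
        rcases le_or_gt r (1 / 2) with hr | hr
        · have hweight : (1 - r ^ 2) ^ (-b) ≤ (3 / 4) ^ (-b) :=
            rpow_le_rpow_of_nonpos (by norm_num) (by nlinarith) (by linarith)
          calc (-log r) ^ a * (1 - r ^ 2) ^ (-b) ≤ (C₀ * r ^ (-(1 / 2) : ℝ)) * (3 / 4) ^ (-b) :=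
                mul_le_mul (hlog r ⟨hr0, hr⟩) hweight (by positivity) (by positivity)
            _ ≤ _ := by nlinarith [rpow_nonneg (by norm_num : (0 : ℝ) ≤ 3 / 4) (-b),
                  rpow_nonneg (by norm_num : (0 : ℝ) ≤ 2) |a|]
        · have hweight : (1 - r ^ 2) ^ (-b) ≤ (1 - r) ^ (-b) :=
            rpow_le_rpow_of_nonpos (by linarith) (by nlinarith) (by linarith)
          calc (-log r) ^ a * (1 - r ^ 2) ^ (-b) ≤ (2 ^ |a| * (1 - r) ^ a) * (1 - r) ^ (-b) :=
                mul_le_mul (neg_log_rpow_le_mul_one_sub_rpow a ⟨hr.le, hr1⟩) hweight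
                  (by positivity) (by positivity)
            _ = 2 ^ |a| * (1 - r) ^ (a - b) := by
                rw [mul_assoc, ← rpow_add (by linarith), ← sub_eq_add_neg]
            _ ≤ _ := le_add_of_nonneg_left (by positivity)
    _ ≤ (C₀ * (3 / 4) ^ (-b) + 2 ^ |a|) * (r ^ (-(1 / 2) : ℝ) + (1 - r) ^ (a - b)) := by
        have hX : 0 ≤ C₀ * (3 / 4) ^ (-b) := by positivity
        have hY : (0 : ℝ) ≤ 2 ^ |a| := by positivity
        nlinarith [mul_nonneg hX hsing0, mul_nonneg hY hsqrt0]

private lemma smul_rpow_mul_exp_neg_div_comp_rpow_neg_one {p c x : ℝ} (hx : 0 < x) :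
    (|(-1 : ℝ)| * x ^ ((-1 : ℝ) - 1)) • ((x ^ (-1 : ℝ)) ^ (-(p + 1)) * exp (-c / x ^ (-1 : ℝ))) =
      x ^ (p - 1) * exp (-(c * x)) := by
  rw [rpow_neg_one, ← rpow_neg_one, ← rpow_mul hx.le, smul_eq_mul, abs_neg, abs_one, one_mul,
    ← mul_assoc, ← rpow_add hx, rpow_neg_one, div_inv_eq_mul, neg_mul]
  ring_nf

theorem integrableOn_rpow_mul_exp_neg_div {p c : ℝ} (hp : 0 < p) (hc : 0 < c) :
    IntegrableOn (fun s => s ^ (-(p + 1)) * exp (-c / s)) (Ioi 0) := by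
  have hGamma : IntegrableOn (fun x : ℝ => x ^ (p - 1) * exp (-(c * x))) (Ioi 0) := by
    simpa only [rpow_one, neg_mul] using
      integrableOn_rpow_mul_exp_neg_mul_rpow (by linarith : -1 < p - 1) one_pos hc
  rw [← integrableOn_Ioi_comp_rpow_iff _ (by norm_num : (-1 : ℝ) ≠ 0)]
  exact hGamma.congr_fun (fun x hx => (smul_rpow_mul_exp_neg_div_comp_rpow_neg_one hx).symm)
    measurableSet_Ioi

theorem integral_rpow_mul_exp_neg_div {p c : ℝ} (hp : 0 < p) (hc : 0 < c) :
    ∫ s in Ioi 0, s ^ (-(p + 1)) * exp (-c / s) = Gamma p / c ^ p := by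
  rw [← integral_comp_rpow_Ioi _ (by norm_num : (-1 : ℝ) ≠ 0),
    setIntegral_congr_fun measurableSet_Ioi
      (fun x hx => smul_rpow_mul_exp_neg_div_comp_rpow_neg_one hx),
    integral_rpow_mul_exp_neg_mul_Ioi hp hc, one_div, inv_rpow hc.le]
  ring

theorem integral_Ioo_zero_one_comp_one_sub (h : ℝ → ℝ) :
    ∫ r in Ioo (0 : ℝ) 1, h (1 - r) = ∫ r in Ioo (0 : ℝ) 1, h r := by
  rw [← integral_Ioc_eq_integral_Ioo, ← integral_Ioc_eq_integral_Ioo,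
    ← intervalIntegral.integral_of_le zero_le_one, ← intervalIntegral.integral_of_le zero_le_one,
    intervalIntegral.integral_comp_sub_left]
  norm_num

theorem MeasureTheory.IntegrableOn.comp_one_sub_Ioo {h : ℝ → ℝ}
    (hh : IntegrableOn h (Ioo 0 1)) : IntegrableOn (fun r => h (1 - r)) (Ioo 0 1) := by
  rw [← intervalIntegrable_iff_integrableOn_Ioo_of_le zero_le_one] at hh ⊢
  simpa using (hh.comp_sub_left 1).symm

theorem abs_integral_Ioo_le_of_abs_le {f : ℝ → ℝ} {A p c : ℝ} (hA : 0 ≤ A) (hp : 0 < p)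
    (hc : 0 < c) (hf : ∀ r ∈ Ioo (0 : ℝ) 1,
      |f r| ≤ A * (r ^ (-(1 / 2) : ℝ) + (1 - r) ^ (-(p + 1)) * exp (-c / (1 - r)))) :
    |∫ r in Ioo (0 : ℝ) 1, f r| ≤ A * (2 + Gamma p / c ^ p) := by
  set g : ℝ → ℝ := fun s => s ^ (-(p + 1)) * exp (-c / s)
  have hg : IntegrableOn g (Ioi 0) := integrableOn_rpow_mul_exp_neg_div hp hc
  have hsqrt_int : IntegrableOn (fun r : ℝ => r ^ (-(1 / 2) : ℝ)) (Ioo 0 1) :=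
    (intervalIntegrable_iff_integrableOn_Ioo_of_le zero_le_one).1
      (intervalIntegral.intervalIntegrable_rpow' (by norm_num))
  have hsqrt : ∫ r in Ioo (0 : ℝ) 1, r ^ (-(1 / 2) : ℝ) = 2 := by
    rw [← integral_Ioc_eq_integral_Ioo, ← intervalIntegral.integral_of_le zero_le_one,
      integral_rpow (Or.inl (by norm_num))]
    norm_num
  have hg_int : IntegrableOn (fun r => g (1 - r)) (Ioo 0 1) :=
    (hg.mono_set Ioo_subset_Ioi_self).comp_one_sub_Ioo
  have hg_le : ∫ r in Ioo (0 : ℝ) 1, g (1 - r) ≤ Gamma p / c ^ p := by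
    rw [integral_Ioo_zero_one_comp_one_sub, ← integral_rpow_mul_exp_neg_div hp hc]
    have hg_nonneg : ∀ s ∈ Ioi (0 : ℝ), 0 ≤ g s :=
      fun s hs => mul_nonneg (rpow_nonneg (le_of_lt hs) _) (exp_pos _).le
    exact setIntegral_mono_set hg ((ae_restrict_iff' measurableSet_Ioi).2 (ae_of_all _ hg_nonneg))
      Ioo_subset_Ioi_self.eventuallyLE
  calc |∫ r in Ioo (0 : ℝ) 1, f r| ≤ ∫ r in Ioo (0 : ℝ) 1, |f r| := abs_integral_le_integral_abs
    _ ≤ ∫ r in Ioo (0 : ℝ) 1, A * (r ^ (-(1 / 2) : ℝ) + g (1 - r)) :=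
        integral_mono_of_nonneg (ae_of_all _ fun _ => abs_nonneg _)
          ((hsqrt_int.add hg_int).const_mul A)
          ((ae_restrict_iff' measurableSet_Ioo).2 (ae_of_all _ hf))
    _ = A * (2 + ∫ r in Ioo (0 : ℝ) 1, g (1 - r)) := by
        rw [integral_const_mul, integral_add hsqrt_int hg_int, hsqrt]
    _ ≤ A * (2 + Gamma p / c ^ p) := by gcongr

noncomputable def rieszIntegrand {n : ℕ} (α : Fin n → ℕ) (x y : EuclideanSpace ℝ (Fin n))
    (r : ℝ) : ℝ :=
  r ^ (n - 1) * (-log r) ^ (((∑ j, α j : ℕ) : ℝ) / 2 - 1) *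
    (1 - r ^ 2) ^ (-(((n : ℝ) + ((∑ j, α j : ℕ) : ℝ)) / 2)) *
    (∏ j, hermiteH (α j) ((x j - r * y j) / √(1 - r ^ 2))) * exp (-‖x - r • y‖ ^ 2 / (1 - r ^ 2))

theorem exists_abs_rieszIntegrand_le {n : ℕ} (α : Fin n → ℕ) :
    ∃ A, 0 ≤ A ∧ ∀ x y : EuclideanSpace ℝ (Fin n), ‖x - y‖ * ‖y‖ ≤ 2 → ∀ r ∈ Ioo (0 : ℝ) 1,
      |rieszIntegrand α x y r| ≤ A * (r ^ (-(1 / 2) : ℝ) +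
        (1 - r) ^ (-((n : ℝ) / 2 + 1)) * exp (-(‖x - y‖ ^ 2 / 4) / (1 - r))) := by
  set N : ℕ := ∑ j, α j
  obtain ⟨M, hM0, hM⟩ := exists_abs_prod_hermiteH_le α
  obtain ⟨C, hC0, hC⟩ := exists_pow_mul_neg_log_rpow_mul_rpow_le (n - 1) ((N : ℝ) / 2 - 1)
    (b := ((n : ℝ) + N) / 2) (by positivity)
  refine ⟨C * (M * exp 2), by positivity, fun x y hxy r hr => ?_⟩
  have hu : 0 < 1 - r ^ 2 := by nlinarith [hr.1, hr.2]
  have hexp_le_one : exp (-(‖x - y‖ ^ 2 / 4) / (1 - r)) ≤ 1 :=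
    exp_le_one_iff.2 (div_nonpos_of_nonpos_of_nonneg (by nlinarith) (by linarith [hr.2]))
  have hgauss := (abs_prod_hermiteH_mul_exp_le hM (x - r • y) hu).trans
    (mul_le_mul_of_nonneg_left (exp_neg_norm_sub_smul_sq_div_le hxy hr) hM0)
  have hweight := hC r hr
  rw [show (N : ℝ) / 2 - 1 - (n + N) / 2 = -((n : ℝ) / 2 + 1) by ring] at hweight
  have hcoord (j : Fin n) : (x - r • y) j = x j - r * y j := by simp
  set E := exp (-(‖x - y‖ ^ 2 / 4) / (1 - r))
  set w := r ^ (n - 1) * (-log r) ^ ((N : ℝ) / 2 - 1) * (1 - r ^ 2) ^ (-(((n : ℝ) + N) / 2))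
  have hw : 0 ≤ w := by
    have hlog := neg_nonneg.2 (log_nonpos hr.1.le hr.2.le)
    exact mul_nonneg (mul_nonneg (pow_nonneg hr.1.le _) (rpow_nonneg hlog _)) (rpow_nonneg hu.le _)
  have hs : 0 ≤ r ^ (-(1 / 2) : ℝ) := rpow_nonneg hr.1.le _
  have hg : 0 ≤ (1 - r) ^ (-((n : ℝ) / 2 + 1)) := rpow_nonneg (by linarith [hr.2]) _
  calc |rieszIntegrand α x y r|
      = w * (|∏ j, hermiteH (α j) ((x - r • y) j / √(1 - r ^ 2))| *
          exp (-‖x - r • y‖ ^ 2 / (1 - r ^ 2))) := by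
        rw [rieszIntegrand, abs_mul, abs_mul, abs_of_nonneg hw, abs_of_pos (exp_pos _), mul_assoc]
        simp only [hcoord]
    _ ≤ (C * (r ^ (-(1 / 2) : ℝ) + (1 - r) ^ (-((n : ℝ) / 2 + 1)))) * (M * (exp 2 * E)) :=
        mul_le_mul hweight hgauss (by positivity) (by positivity)
    _ ≤ C * (M * exp 2) * (r ^ (-(1 / 2) : ℝ) + (1 - r) ^ (-((n : ℝ) / 2 + 1)) * E) := by
        have hCM : 0 ≤ C * (M * exp 2) := by positivity
        nlinarith [mul_le_mul_of_nonneg_left hexp_le_one (mul_nonneg hCM hs)]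

theorem norm_sub_mul_le_of_mem_Nset {n : ℕ} {δ : ℝ} {x y : EuclideanSpace ℝ (Fin n)}
    (h : (x, y) ∈ Nset n δ) : ‖x - y‖ * (1 + ‖x‖ + ‖y‖) ≤ δ :=
  (le_div_iff₀ (by positivity)).1 h

theorem exists_abs_integral_rieszIntegrand_le {n : ℕ} (hn : 1 ≤ n) (α : Fin n → ℕ) :
    ∃ D, ∀ x y : EuclideanSpace ℝ (Fin n), (x, y) ∈ Nset n 2 → x ≠ y →
      |∫ r in Ioo (0 : ℝ) 1, rieszIntegrand α x y r| ≤ D / ‖x - y‖ ^ n := by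
  obtain ⟨A, hA0, hA⟩ := exists_abs_rieszIntegrand_le α
  refine ⟨A * (2 + Gamma ((n : ℝ) / 2)) * 2 ^ n, fun x y hxy hne => ?_⟩
  set t := ‖x - y‖
  have ht : 0 < t := norm_pos_iff.2 (sub_ne_zero.2 hne)
  have hN := norm_sub_mul_le_of_mem_Nset hxy
  have ht2 : t / 2 ≤ 1 := by nlinarith [norm_nonneg x, norm_nonneg y]
  have hscale : (t ^ 2 / 4) ^ ((n : ℝ) / 2) = (t / 2) ^ n := by
    rw [rpow_div_two_eq_sqrt _ (by positivity), show t ^ 2 / 4 = (t / 2) ^ 2 by ring,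
      sqrt_sq (by positivity), rpow_natCast]
  have hpow : (t / 2) ^ n ≤ 1 := pow_le_one₀ (by positivity) ht2
  calc |∫ r in Ioo (0 : ℝ) 1, rieszIntegrand α x y r|
      ≤ A * (2 + Gamma ((n : ℝ) / 2) / (t ^ 2 / 4) ^ ((n : ℝ) / 2)) :=
        abs_integral_Ioo_le_of_abs_le hA0 (div_pos (Nat.cast_pos.2 hn) two_pos) (by positivity)
          (hA x y (by nlinarith [norm_nonneg x, norm_nonneg y]))
    _ ≤ A * ((2 + Gamma ((n : ℝ) / 2)) / (t / 2) ^ n) := by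
        rw [hscale, add_div]
        gcongr
        exact le_div_self zero_le_two (by positivity) hpow
    _ = A * (2 + Gamma ((n : ℝ) / 2)) * 2 ^ n / t ^ n := by
        rw [div_pow]; field_simp

theorem riesz_kernel_size_estimate_general (n : ℕ) (hn : 1 ≤ n) (α : Fin n → ℕ) :
    ∃ C : ℝ, ∀ x y : EuclideanSpace ℝ (Fin n), (x, y) ∈ Nset n 2 → x ≠ y →
      |rieszKernel α x y| ≤ C / ‖x - y‖ ^ n := by
  obtain ⟨D, hD⟩ := exists_abs_integral_rieszIntegrand_le hn α
  refine ⟨|(-1 : ℝ) ^ (∑ j, α j) / (π ^ ((n : ℝ) / 2) * Gamma ((∑ j, α j : ℕ) / 2 : ℝ))| * D,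
    fun x y hxy hne => ?_⟩
  rw [rieszKernel, abs_mul, mul_div_assoc]
  exact mul_le_mul_of_nonneg_left (hD x y hxy hne) (abs_nonneg _)

/-- size estimate for the Riesz kernel in the local region:
|K_α(x,y)| ≤ C|x−y|⁻ⁿ on N₂. -/
theorem riesz_kernel_size_estimate (n : ℕ) (hn : 1 ≤ n) (α : Fin n → ℕ) (hα : α ≠ 0) :
    ∃ C : ℝ, ∀ x y : EuclideanSpace ℝ (Fin n), (x, y) ∈ Nset n 2 → x ≠ y →
      |rieszKernel α x y| ≤ C / ‖x - y‖ ^ n :=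
  riesz_kernel_size_estimate_general n hn α
end

section
/- Let n ≥ 1 and a ∈ ℕ. There is a constant C (depending only on n and a) such that for all x ∈ ℝ^n with x ≠ 0 and all y ∈ ℝ^n with r_0 ≤ 1/3 or r_0 ≥ 2, where r_0 = ⟨x,y⟩/|x|^2, one has ∫_{1/2}^1 |x−ry|^a (1−r)^{−(n+a+2)/2} e^{−|rx−y|^2/(1−r^2)} dr ≤ C |x|^{−n}. -/
/-! Write `r₀ = ⟪y, x⟫ / ‖x‖²`. Then `‖r • x - y‖² = (r - r₀)² ‖x‖² + (‖y‖² - r₀² ‖x‖²)`, the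
second term being nonnegative by Cauchy–Schwarz, and for `r ∈ (1/2, 1)` the hypothesis keeps
`r - r₀` away from `0`; hence `‖r • x - y‖²` dominates both `‖x‖²` and `‖x - r • y‖²`.
As `1 - r² ≤ 2 (1 - r)`, half of the Gaussian factor absorbs `‖x - r • y‖ ^ a` at the cost of
`(1 - r) ^ (a / 2)`, and the other half leaves `exp (-b / (1 - r))` with `b = ‖x‖² / 288`.
The substitution `u = b / (1 - r)` evaluates `∫_{r < 1} (1 - r) ^ (-(n / 2 + 1)) e^{-b / (1 - r)}`
as `Γ(n / 2) b ^ (-n / 2)`, which is a constant times `‖x‖ ^ (-n)`. -/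

open MeasureTheory Real Filter Set

open scoped Nat

lemma hasDerivAt_div_one_sub (b : ℝ) {r : ℝ} (hr : r ≠ 1) :
    HasDerivAt (fun t => b / (1 - t)) (b / (1 - r) ^ 2) r :=
  ((hasDerivAt_const r b).fun_div ((hasDerivAt_id' r).const_sub 1)
    (sub_ne_zero.2 hr.symm)).congr_deriv (by ring)

lemma injOn_div_one_sub {b : ℝ} (hb : b ≠ 0) : InjOn (fun t => b / (1 - t)) (Iio 1) := by
  intro s hs t ht h
  rw [div_eq_div_iff (sub_pos.2 (mem_Iio.1 hs)).ne' (sub_pos.2 (mem_Iio.1 ht)).ne'] at h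
  linarith [mul_left_cancel₀ hb h]

lemma image_div_one_sub_Iio {b : ℝ} (hb : 0 < b) : (fun t => b / (1 - t)) '' Iio 1 = Ioi 0 := by
  ext u
  constructor
  · rintro ⟨r, hr, rfl⟩
    exact div_pos hb (sub_pos.2 hr)
  · intro (hu : 0 < u)
    refine ⟨1 - b / u, by simpa using div_pos hb hu, ?_⟩
    simp [hb.ne']

lemma abs_deriv_smul_gammaIntegrand_div_one_sub {s b r : ℝ} (hb : 0 < b) (hr : r < 1) :
    |b / (1 - r) ^ 2| • (b ^ (-s) * (exp (-(b / (1 - r))) * (b / (1 - r)) ^ (s - 1))) =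
      (1 - r) ^ (-(s + 1)) * exp (-b / (1 - r)) := by
  have ht : 0 < 1 - r := sub_pos.2 hr
  have hb' : b ^ (-s) * b ^ (s - 1) * b = 1 := by
    rw [← rpow_add hb, ← rpow_add_one hb.ne', show -s + (s - 1) + 1 = 0 by ring, rpow_zero]
  have ht' : (1 - r) ^ (-(s + 1)) * ((1 - r) ^ (s - 1) * (1 - r) ^ 2) = 1 := by
    rw [← rpow_natCast, ← rpow_add ht, ← rpow_add ht,
      show -(s + 1) + (s - 1 + ((2 : ℕ) : ℝ)) = 0 by push_cast; ring, rpow_zero]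
  rw [smul_eq_mul, abs_of_pos (by positivity), div_rpow hb.le ht.le, neg_div,
    eq_inv_of_mul_eq_one_left ht']
  field_simp
  linear_combination hb'

theorem integral_Iio_one_rpow_mul_exp_neg_div {s b : ℝ} (hs : 0 < s) (hb : 0 < b) :
    IntegrableOn (fun r => (1 - r) ^ (-(s + 1)) * exp (-b / (1 - r))) (Iio 1) ∧
      ∫ r in Iio 1, (1 - r) ^ (-(s + 1)) * exp (-b / (1 - r)) = Gamma s * b ^ (-s) := by
  have hderiv : ∀ r ∈ Iio (1 : ℝ),
      HasDerivWithinAt (fun t => b / (1 - t)) (b / (1 - r) ^ 2) (Iio 1) r :=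
    fun r hr => (hasDerivAt_div_one_sub b (ne_of_lt hr)).hasDerivWithinAt
  have hcongr : EqOn (fun r => |b / (1 - r) ^ 2| •
      (b ^ (-s) * (exp (-(b / (1 - r))) * (b / (1 - r)) ^ (s - 1))))
      (fun r => (1 - r) ^ (-(s + 1)) * exp (-b / (1 - r))) (Iio 1) :=
    fun r hr => abs_deriv_smul_gammaIntegrand_div_one_sub hb hr
  have hinj := injOn_div_one_sub hb.ne'
  constructor
  · refine IntegrableOn.congr_fun ?_ hcongr measurableSet_Iio
    rw [← integrableOn_image_iff_integrableOn_abs_deriv_smul measurableSet_Iio hderiv hinj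
      (fun u => b ^ (-s) * (exp (-u) * u ^ (s - 1))), image_div_one_sub_Iio hb]
    exact (GammaIntegral_convergent hs).const_mul _
  · rw [← setIntegral_congr_fun measurableSet_Iio hcongr,
      ← integral_image_eq_integral_abs_deriv_smul measurableSet_Iio hderiv hinj
        (fun u => b ^ (-s) * (exp (-u) * u ^ (s - 1))),
      image_div_one_sub_Iio hb, integral_const_mul, ← Gamma_eq_integral hs, mul_comm]

lemma sq_rpow_natCast_div_two {x : ℝ} (hx : 0 ≤ x) (k : ℕ) : (x ^ 2) ^ ((k : ℝ) / 2) = x ^ k := by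
  rw [rpow_div_two_eq_sqrt _ (sq_nonneg x), sqrt_sq hx, rpow_natCast]

lemma rpow_half_mul_exp_neg_le (a : ℕ) {s : ℝ} (hs : 0 ≤ s) :
    s ^ ((a : ℝ) / 2) * exp (-s) ≤ 1 + a ! := by
  have hhalf : s ^ ((a : ℝ) / 2) ≤ 1 + s ^ a := by
    rcases le_total s 1 with h | h
    · linarith [rpow_le_one hs h (by positivity : (0 : ℝ) ≤ a / 2), pow_nonneg hs a]
    · have := rpow_le_rpow_of_exponent_le h (half_le_self (Nat.cast_nonneg a))
      rw [rpow_natCast] at this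
      linarith
  have hfact : s ^ a * exp (-s) ≤ a ! := by
    rw [exp_neg, ← div_eq_mul_inv, div_le_iff₀ (exp_pos s), mul_comm, ← div_le_iff₀ (by positivity)]
    exact Real.pow_div_factorial_le_exp s hs a
  calc s ^ ((a : ℝ) / 2) * exp (-s) ≤ (1 + s ^ a) * exp (-s) := by gcongr
    _ = exp (-s) + s ^ a * exp (-s) := by ring
    _ ≤ 1 + a ! := add_le_add (exp_le_one_iff.2 (neg_nonpos.2 hs)) hfact

lemma pow_mul_exp_neg_sq_div_le (a : ℕ) {E c : ℝ} (hE : 0 ≤ E) (hc : 0 < c) :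
    E ^ a * exp (-(E ^ 2 / c)) ≤ (1 + a !) * c ^ ((a : ℝ) / 2) := by
  have hs : 0 ≤ E ^ 2 / c := by positivity
  have hEa : E ^ a = c ^ ((a : ℝ) / 2) * (E ^ 2 / c) ^ ((a : ℝ) / 2) := by
    rw [← mul_rpow hc.le hs, mul_div_cancel₀ _ hc.ne', sq_rpow_natCast_div_two hE]
  rw [hEa, mul_assoc, mul_comm (1 + _ : ℝ)]
  exact mul_le_mul_of_nonneg_left (rpow_half_mul_exp_neg_le a hs) (by positivity)

lemma sq_sub_ge_of_far {r r₀ : ℝ} (hr : r ∈ Ioo (1 / 2 : ℝ) 1)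
    (hr₀ : r₀ ≤ 1 / 3 ∨ 2 ≤ r₀) : 1 / 72 + r₀ ^ 2 / 8 ≤ (r - r₀) ^ 2 := by
  obtain ⟨hr1, hr2⟩ := hr
  rcases hr₀ with h | h
  · nlinarith [mul_nonneg (by linarith : (0 : ℝ) ≤ 1 / 3 - r₀) (by linarith : (0 : ℝ) ≤ r - r₀)]
  · nlinarith [mul_nonneg (by linarith : (0 : ℝ) ≤ r₀ - 2) (by linarith : (0 : ℝ) ≤ r₀ - r)]

variable {F : Type*} [NormedAddCommGroup F] [InnerProductSpace ℝ F]

lemma norm_smul_sub_sq_ge_of_far {x y : F} (hx : x ≠ 0)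
    (hr₀ : inner ℝ y x / ‖x‖ ^ 2 ≤ 1 / 3 ∨ 2 ≤ inner ℝ y x / ‖x‖ ^ 2)
    {r : ℝ} (hr : r ∈ Ioo (1 / 2 : ℝ) 1) :
    ‖x‖ ^ 2 / 72 ≤ ‖r • x - y‖ ^ 2 ∧ ‖x - r • y‖ ^ 2 ≤ 162 * ‖r • x - y‖ ^ 2 := by
  set r₀ := inner ℝ y x / ‖x‖ ^ 2
  have hN : 0 < ‖x‖ ^ 2 := by positivity
  have hinner : inner ℝ x y = r₀ * ‖x‖ ^ 2 := by
    rw [real_inner_comm, div_mul_cancel₀ _ hN.ne']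
  have hcs : r₀ ^ 2 * ‖x‖ ^ 2 ≤ ‖y‖ ^ 2 := by
    have := real_inner_mul_inner_self_le x y
    rw [real_inner_self_eq_norm_sq, real_inner_self_eq_norm_sq, hinner] at this
    exact le_of_mul_le_mul_right (by linarith) hN
  have hD : ‖r • x - y‖ ^ 2 = (r - r₀) ^ 2 * ‖x‖ ^ 2 + (‖y‖ ^ 2 - r₀ ^ 2 * ‖x‖ ^ 2) := by
    rw [norm_sub_sq_real, norm_smul, real_inner_smul_left, hinner, mul_pow, Real.norm_eq_abs,
      sq_abs]
    ring
  have hE : ‖x - r • y‖ ≤ ‖x‖ + ‖y‖ := by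
    calc ‖x - r • y‖ ≤ ‖x‖ + ‖r • y‖ := norm_sub_le _ _
      _ ≤ ‖x‖ + ‖y‖ := by
        rw [norm_smul, Real.norm_eq_abs, abs_of_pos (by linarith [hr.1])]
        gcongr
        exact mul_le_of_le_one_left (norm_nonneg y) hr.2.le
  have hfar := sq_sub_ge_of_far hr hr₀
  constructor
  · nlinarith
  · nlinarith [sq_nonneg (‖x‖ - ‖y‖), norm_nonneg (x - r • y), norm_nonneg x, norm_nonneg y]

lemma integrand_le_of_far {x y : F} (hx : x ≠ 0)
    (hr₀ : inner ℝ y x / ‖x‖ ^ 2 ≤ 1 / 3 ∨ 2 ≤ inner ℝ y x / ‖x‖ ^ 2) (m : ℝ) (a : ℕ)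
    {r : ℝ} (hr : r ∈ Ioo (1 / 2 : ℝ) 1) :
    ‖x - r • y‖ ^ a * (1 - r) ^ (-((m + a + 2) / 2)) * exp (-‖r • x - y‖ ^ 2 / (1 - r ^ 2)) ≤
      (1 + a !) * 648 ^ ((a : ℝ) / 2) *
        ((1 - r) ^ (-(m / 2 + 1)) * exp (-(‖x‖ ^ 2 / 288) / (1 - r))) := by
  obtain ⟨hDx, hDE⟩ := norm_smul_sub_sq_ge_of_far hx hr₀ hr
  have ht : 0 < 1 - r := sub_pos.2 hr.2
  have hexp : exp (-‖r • x - y‖ ^ 2 / (1 - r ^ 2)) ≤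
      exp (-(‖x - r • y‖ ^ 2 / (648 * (1 - r)))) * exp (-(‖x‖ ^ 2 / 288) / (1 - r)) := by
    rw [← exp_add, exp_le_exp, neg_div, neg_div, ← neg_add, neg_le_neg_iff]
    calc ‖x - r • y‖ ^ 2 / (648 * (1 - r)) + ‖x‖ ^ 2 / 288 / (1 - r)
        ≤ ‖r • x - y‖ ^ 2 / (4 * (1 - r)) + ‖r • x - y‖ ^ 2 / (4 * (1 - r)) := by
          refine add_le_add ?_ ?_
          · rw [div_le_div_iff₀ (by positivity) (by positivity)]
            nlinarith [mul_le_mul_of_nonneg_right hDE ht.le]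
          · rw [div_div, div_le_div_iff₀ (by positivity) (by positivity)]
            nlinarith [mul_le_mul_of_nonneg_right hDx ht.le]
      _ = ‖r • x - y‖ ^ 2 / (2 * (1 - r)) := by field_simp; ring
      _ ≤ ‖r • x - y‖ ^ 2 / (1 - r ^ 2) :=
          div_le_div_of_nonneg_left (sq_nonneg _) (by nlinarith [hr.1]) (by nlinarith)
  have hpow : (1 - r) ^ ((a : ℝ) / 2) * (1 - r) ^ (-((m + a + 2) / 2)) =
      (1 - r) ^ (-(m / 2 + 1)) := by
    rw [← rpow_add ht]; ring_nf
  calc ‖x - r • y‖ ^ a * (1 - r) ^ (-((m + a + 2) / 2)) * exp (-‖r • x - y‖ ^ 2 / (1 - r ^ 2))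
      ≤ (‖x - r • y‖ ^ a * exp (-(‖x - r • y‖ ^ 2 / (648 * (1 - r))))) *
          (1 - r) ^ (-((m + a + 2) / 2)) * exp (-(‖x‖ ^ 2 / 288) / (1 - r)) := by
        rw [mul_right_comm _ (exp _), mul_assoc _ (exp _)]
        gcongr
    _ ≤ ((1 + a !) * (648 * (1 - r)) ^ ((a : ℝ) / 2)) *
          (1 - r) ^ (-((m + a + 2) / 2)) * exp (-(‖x‖ ^ 2 / 288) / (1 - r)) := by
        gcongr ?_ * _ * _
        exact pow_mul_exp_neg_sq_div_le a (norm_nonneg _) (mul_pos (by norm_num) ht)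
    _ = (1 + a !) * 648 ^ ((a : ℝ) / 2) *
          ((1 - r) ^ (-(m / 2 + 1)) * exp (-(‖x‖ ^ 2 / 288) / (1 - r))) := by
        rw [mul_rpow (by norm_num : (0 : ℝ) ≤ 648) ht.le, ← hpow]
        ring

/-- if r₀ = ⟨x,y⟩/|x|² satisfies r₀ ≤ 1/3 or r₀ ≥ 2, then
∫_{1/2}^1 |x−ry|^a (1−r)^{-(n+a+2)/2} e^{-|rx−y|²/(1−r²)} dr ≤ C|x|⁻ⁿ. -/
theorem integral_estimate_r0_far (n : ℕ) (hn : 1 ≤ n) (a : ℕ) :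
    ∃ C : ℝ, ∀ x y : EuclideanSpace ℝ (Fin n), x ≠ 0 →
      ((inner ℝ y x : ℝ) / ‖x‖ ^ 2 ≤ 1 / 3 ∨ 2 ≤ (inner ℝ y x : ℝ) / ‖x‖ ^ 2) →
      (∫ r in Set.Ioo (1 / 2 : ℝ) 1,
          ‖x - r • y‖ ^ a * (1 - r) ^ (-(((n : ℝ) + a + 2) / 2)) *
            Real.exp (-‖r • x - y‖ ^ 2 / (1 - r ^ 2))) ≤ C / ‖x‖ ^ n := by
  set K : ℝ := (1 + a !) * 648 ^ ((a : ℝ) / 2)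
  have hs : 0 < (n : ℝ) / 2 := by have : (1 : ℝ) ≤ n := mod_cast hn; positivity
  refine ⟨K * (Gamma (n / 2) * 288 ^ ((n : ℝ) / 2)), fun x y hx hr₀ => ?_⟩
  set g : ℝ → ℝ := fun r => K * ((1 - r) ^ (-((n : ℝ) / 2 + 1)) * exp (-(‖x‖ ^ 2 / 288) / (1 - r)))
  obtain ⟨hint, hval⟩ :=
    integral_Iio_one_rpow_mul_exp_neg_div hs (by positivity : 0 < ‖x‖ ^ 2 / 288)
  have hg : IntegrableOn g (Iio 1) := hint.const_mul K
  have hg_nonneg : ∀ r ∈ Iio (1 : ℝ), 0 ≤ g r :=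
    fun r hr => by have := (sub_pos.2 (mem_Iio.1 hr)).le; positivity
  calc _ ≤ ∫ r in Ioo (1 / 2 : ℝ) 1, g r := by
        refine integral_mono_of_nonneg ?_ (hg.mono_set Ioo_subset_Iio_self) ?_
        · filter_upwards [ae_restrict_mem measurableSet_Ioo] with r hr
          have := (sub_pos.2 hr.2).le
          positivity
        · filter_upwards [ae_restrict_mem measurableSet_Ioo] with r hr
          exact integrand_le_of_far hx hr₀ n a hr
    _ ≤ ∫ r in Iio 1, g r := setIntegral_mono_set hg
          ((ae_restrict_mem measurableSet_Iio).mono hg_nonneg) Ioo_subset_Iio_self.eventuallyLE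
    _ = K * (Gamma (n / 2) * 288 ^ ((n : ℝ) / 2)) / ‖x‖ ^ n := by
        rw [integral_const_mul, hval, div_rpow (sq_nonneg _) (by norm_num),
          rpow_neg (sq_nonneg _), rpow_neg (by norm_num : (0 : ℝ) ≤ 288),
          sq_rpow_natCast_div_two (norm_nonneg x)]
        field_simp
end

section
/- Let n ≥ 2 and let Ω be the set of pairs (x,y) ∈ ℝ^n×ℝ^n with x, y ≠ 0 satisfying: x_1/|x| > √3/2, y_1/|y| > 1/2, |x|·|x−y_x| ≥ 1, |x|/3 ≤ |y_x| < |x|, |y_⊥| ≤ |x|, θ(x,y) ≤ π/6, and |y_⊥|^2 |x| / |x−y_x| ≤ |x|^2/4. Then there is a constant c > 0 such that for every (x,y) ∈ Ω, c |x−y_x| ≤ |x| − |y| ≤ |x−y_x|; in particular |y| < |x| and |x| − |y| is comparable to |x−y_x| on Ω. -/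
/-! With `a = |x|`, `P = |y_x|` and `Q = |y_⊥|`, the angle condition gives `⟨x, y⟩ ≥ 0`, so `y_x` is a
nonnegative multiple of `x` and `|x - y_x| = a - P`, while Pythagoras gives `|y|² = P² + Q²`.
The condition on `|y_⊥|² |x| / |x - y_x|` says `Q² ≤ a (a - P) / 4`, and since `P ≥ a / 3` this
forces `|y| ≤ (3a + 5P) / 8`, i.e. `|x| - |y| ≥ 5/8 |x - y_x|`. -/

open MeasureTheory Real Filter Set

theorem InnerProductGeometry.inner_nonneg_of_angle_le_pi_div_two {V : Type*}
    [NormedAddCommGroup V] [InnerProductSpace ℝ V] {x y : V} (h : angle x y ≤ π / 2) :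
    0 ≤ inner ℝ x y := by
  rw [← cos_angle_mul_norm_mul_norm]
  have : 0 ≤ cos (angle x y) :=
    cos_nonneg_of_neg_pi_div_two_le_of_le (by linarith [angle_nonneg x y, pi_pos]) h
  positivity

theorem hypot_comparison {a P Q Y : ℝ} (hP : a / 3 ≤ P) (hPa : P < a)
    (hQ : Q ^ 2 * a / (a - P) ≤ a ^ 2 / 4) (hY : 0 ≤ Y) (hpyth : Y ^ 2 = P ^ 2 + Q ^ 2) :
    5 / 8 * (a - P) ≤ a - Y ∧ a - Y ≤ a - P ∧ Y < a := by
  have hQ' : Q ^ 2 ≤ a * (a - P) / 4 := by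
    rw [div_le_iff₀ (sub_pos.2 hPa)] at hQ
    nlinarith
  have hPY : P ≤ Y := abs_le_of_sq_le_sq' (by nlinarith) hY |>.2
  -- `((3a + 5P)/8)² - P² - a(a - P)/4 = (a - P)(39P - 7a)/64 ≥ 0`
  have hY_le : Y ≤ (3 * a + 5 * P) / 8 := by
    refine abs_le_of_sq_le_sq' ?_ (by linarith) |>.2
    nlinarith [mul_nonneg (sub_nonneg.2 hPa.le) (by linarith : (0 : ℝ) ≤ 39 * P - 7 * a)]
  exact ⟨by linarith, by linarith, by linarith⟩

section projPar

variable {n : ℕ} (x y : EuclideanSpace ℝ (Fin n))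

theorem inner_projPar_sub_projPar_eq_zero : inner ℝ (projPar x y) (y - projPar x y) = 0 := by
  rcases eq_or_ne x 0 with rfl | hx
  · simp [projPar]
  · have hx' : ‖x‖ ≠ 0 := norm_ne_zero_iff.2 hx
    rw [projPar, inner_sub_right, real_inner_smul_left, real_inner_smul_left,
      real_inner_smul_right, real_inner_self_eq_norm_sq, real_inner_comm x y]
    field_simp
    ring

theorem norm_sq_eq_norm_projPar_sq_add_norm_sub_sq :
    ‖y‖ ^ 2 = ‖projPar x y‖ ^ 2 + ‖y - projPar x y‖ ^ 2 := by
  simpa [sq] using norm_add_sq_eq_norm_sq_add_norm_sq_real (inner_projPar_sub_projPar_eq_zero x y)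

theorem norm_sub_projPar_of_inner_nonneg (hxy : 0 ≤ inner ℝ x y) (hle : ‖projPar x y‖ ≤ ‖x‖) :
    ‖x - projPar x y‖ = ‖x‖ - ‖projPar x y‖ := by
  rcases eq_or_ne x 0 with rfl | hx
  · simp [projPar]
  set t := inner ℝ y x / ‖x‖ ^ 2
  have ht0 : 0 ≤ t := div_nonneg (real_inner_comm x y ▸ hxy) (sq_nonneg _)
  have hnorm : ‖t • x‖ = t * ‖x‖ := by rw [norm_smul, Real.norm_of_nonneg ht0]
  have ht1 : t ≤ 1 :=
    le_of_mul_le_mul_right (by rwa [one_mul, ← hnorm]) (norm_pos_iff.2 hx)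
  calc ‖x - t • x‖ = ‖(1 - t) • x‖ := by rw [sub_smul, one_smul]
    _ = ‖x‖ - ‖t • x‖ := by rw [norm_smul, Real.norm_of_nonneg (by linarith), hnorm]; ring

end projPar

/-- on the region Ω, one has |x| − |y| ≈ |x − y_x|, and in particular |y| < |x|. -/
theorem omega_comparison (n : ℕ) (hn : 2 ≤ n) :
    ∃ c : ℝ, 0 < c ∧ ∀ x y : EuclideanSpace ℝ (Fin n), x ≠ 0 → y ≠ 0 →
      Real.sqrt 3 / 2 < x ⟨0, by omega⟩ / ‖x‖ →
      1 / 2 < y ⟨0, by omega⟩ / ‖y‖ →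
      1 ≤ ‖x‖ * ‖x - projPar x y‖ →
      ‖x‖ / 3 ≤ ‖projPar x y‖ → ‖projPar x y‖ < ‖x‖ →
      ‖y - projPar x y‖ ≤ ‖x‖ →
      InnerProductGeometry.angle x y ≤ Real.pi / 6 →
      ‖y - projPar x y‖ ^ 2 * ‖x‖ / ‖x - projPar x y‖ ≤ ‖x‖ ^ 2 / 4 →
      c * ‖x - projPar x y‖ ≤ ‖x‖ - ‖y‖ ∧ ‖x‖ - ‖y‖ ≤ ‖x - projPar x y‖ ∧ ‖y‖ < ‖x‖ := by
  refine ⟨5 / 8, by norm_num, fun x y _ _ _ _ _ hP hPx _ hangle hQ => ?_⟩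
  have hxy : 0 ≤ inner ℝ x y :=
    InnerProductGeometry.inner_nonneg_of_angle_le_pi_div_two (hangle.trans (by linarith [pi_pos]))
  rw [norm_sub_projPar_of_inner_nonneg x y hxy hPx.le] at hQ ⊢
  exact hypot_comparison hP hPx hQ (norm_nonneg y)
    (norm_sq_eq_norm_projPar_sq_add_norm_sub_sq x y)
end
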